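/- arXiv:2509.01484 — 7 statements merged into one kernel-verified Lean document; each statement's English description precedes it below -/
import Mathlib

section
/- For any s in [0,2], there exists a constant C > 0 such that for all positive integers i, the sum over j ≥ 1 of (i/j)^s / (1+|j-i|)^2 is at most C. -/
/-!
Write `d = |j - i|`. For `x ≥ 0` and `0 ≤ s ≤ 2` we have `x ^ s ≤ 1 + x ^ 2`, and `i ≤ j + d`
gives `(i / j) / (1 + d) ≤ 1 / (1 + d) + 1 / j`. Hence the `j`-th term is at most
`3 / (1 + |j - i|) ^ 2 + 2 / j ^ 2`, where `j = 1 + |j - 1|`, and each of these two series is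
bounded, uniformly in the shift, by `∑_{k ∈ ℤ} 1 / (1 + |k|) ^ 2`.
-/

lemma summable_one_div_one_add_abs_sq : Summable fun k : ℤ => 1 / (1 + |(k : ℝ)|) ^ 2 := by
  have h : Summable fun n : ℕ => 1 / (1 + (n : ℝ)) ^ 2 := by
    simpa [add_comm] using
      (summable_nat_add_iff 1).mpr (Real.summable_one_div_nat_pow.mpr one_lt_two)
  exact .of_nat_of_neg (by simpa using h) (by simpa using h)

lemma pnat_shift_injective (m : ℤ) : Function.Injective fun j : ℕ+ => (j : ℤ) - m :=
  fun _ _ h => PNat.coe_injective (by simpa using h)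

lemma summable_pnat_one_div_one_add_abs_sub_sq (m : ℤ) :
    Summable fun j : ℕ+ => 1 / (1 + |(j : ℝ) - m|) ^ 2 := by
  simpa [Function.comp_def] using
    summable_one_div_one_add_abs_sq.comp_injective (pnat_shift_injective m)

lemma tsum_pnat_one_div_one_add_abs_sub_sq_le (m : ℤ) :
    ∑' j : ℕ+, 1 / (1 + |(j : ℝ) - m|) ^ 2 ≤ ∑' k : ℤ, 1 / (1 + |(k : ℝ)|) ^ 2 := by
  simpa [Function.comp_def] using
    tsum_comp_le_tsum_of_inj summable_one_div_one_add_abs_sq (fun _ => by positivity)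
      (pnat_shift_injective m)

lemma rpow_le_one_add_sq {x s : ℝ} (hx : 0 ≤ x) (hs0 : 0 ≤ s) (hs2 : s ≤ 2) :
    x ^ s ≤ 1 + x ^ 2 := by
  rcases le_total x 1 with h | h
  · linarith [Real.rpow_le_one hx h hs0, sq_nonneg x]
  · have := Real.rpow_le_rpow_of_exponent_le h hs2
    rw [Real.rpow_two] at this
    linarith

lemma div_div_one_add_abs_sub_le {a b : ℝ} (hb : 0 < b) :
    a / b / (1 + |b - a|) ≤ 1 / (1 + |b - a|) + 1 / b := by
  have hd : 0 < 1 + |b - a| := by positivity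
  have hab : a ≤ b + |b - a| := by linarith [neg_abs_le (b - a)]
  rw [div_add_div _ _ hd.ne' hb.ne', div_div, mul_comm b, div_le_div_iff_of_pos_right (by positivity)]
  linarith

lemma rpow_div_div_one_add_abs_sub_sq_le {a b s : ℝ} (ha : 0 ≤ a) (hb : 1 ≤ b)
    (hs0 : 0 ≤ s) (hs2 : s ≤ 2) :
    (a / b) ^ s / (1 + |b - a|) ^ 2 ≤ 3 / (1 + |b - a|) ^ 2 + 2 / (1 + |b - 1|) ^ 2 := by
  have hb1 : 1 + |b - 1| = b := by rw [abs_of_nonneg (by linarith)]; ring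
  set u := 1 / (1 + |b - a|)
  set v := 1 / b
  have hsq : (a / b) ^ 2 / (1 + |b - a|) ^ 2 ≤ (u + v) ^ 2 := by
    rw [← div_pow]
    exact pow_le_pow_left₀ (by positivity) (div_div_one_add_abs_sub_le (by linarith)) 2
  calc (a / b) ^ s / (1 + |b - a|) ^ 2
      ≤ (1 + (a / b) ^ 2) / (1 + |b - a|) ^ 2 := by
        gcongr
        exact rpow_le_one_add_sq (by positivity) hs0 hs2
    _ ≤ u ^ 2 + (u + v) ^ 2 := by
        rw [add_div, one_div_pow]
        gcongr
    _ ≤ 3 * u ^ 2 + 2 * v ^ 2 := by nlinarith [sq_nonneg (u - v)]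
    _ = 3 / (1 + |b - a|) ^ 2 + 2 / (1 + |b - 1|) ^ 2 := by
        rw [hb1]
        simp only [u, v, div_pow, one_pow]
        ring

/-- For any `s ∈ [0,2]` there is `C > 0` such that for all positive integers `i`,
`∑_{j ≥ 1} (i/j)^s / (1+|j-i|)^2 ≤ C`. -/
theorem stmt0 :
    ∀ s : ℝ, s ∈ Set.Icc (0:ℝ) 2 →
    ∃ C : ℝ, 0 < C ∧ ∀ i : ℕ+,
      (∑' j : ℕ+, ((i:ℝ)/(j:ℝ)) ^ s / (1 + |(j:ℝ) - (i:ℝ)|) ^ 2) ≤ C := by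
  rintro s ⟨hs0, hs2⟩
  set K := ∑' k : ℤ, 1 / (1 + |(k : ℝ)|) ^ 2
  have hK : 0 < K :=
    summable_one_div_one_add_abs_sq.tsum_pos (fun _ => by positivity) 0 (by norm_num)
  refine ⟨5 * K, by positivity, fun i => ?_⟩
  have hi := summable_pnat_one_div_one_add_abs_sub_sq i
  have h1 := summable_pnat_one_div_one_add_abs_sub_sq 1
  have hterm (j : ℕ+) : ((i : ℝ) / j) ^ s / (1 + |(j : ℝ) - i|) ^ 2
      ≤ 3 * (1 / (1 + |(j : ℝ) - (i : ℤ)|) ^ 2) + 2 * (1 / (1 + |(j : ℝ) - (1 : ℤ)|) ^ 2) := by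
    simpa only [Int.cast_natCast, Int.cast_one, mul_one_div] using
      rpow_div_div_one_add_abs_sub_sq_le (a := i) (b := j) (by positivity)
        (by exact_mod_cast j.2) hs0 hs2
  have hsum := (hi.mul_left 3).add (h1.mul_left 2)
  calc ∑' j : ℕ+, ((i : ℝ) / j) ^ s / (1 + |(j : ℝ) - i|) ^ 2
      ≤ ∑' j : ℕ+, (3 * (1 / (1 + |(j : ℝ) - (i : ℤ)|) ^ 2)
          + 2 * (1 / (1 + |(j : ℝ) - (1 : ℤ)|) ^ 2)) :=
        (hsum.of_nonneg_of_le (fun _ => by positivity) hterm).tsum_le_tsum hterm hsum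
    _ ≤ 3 * K + 2 * K := by
        rw [(hi.mul_left 3).tsum_add (h1.mul_left 2), tsum_mul_left, tsum_mul_left]
        gcongr <;> exact tsum_pnat_one_div_one_add_abs_sub_sq_le _
    _ = 5 * K := by ring
end

section
/- Let A be a bounded linear operator on ℓ² with matrix entries A_i^j. Define the matrix Ã by Ã_i^j = |A_i^j|/(1+|i-j|). Then Ã defines a bounded operator on ℓ², and there is an absolute constant C such that ‖Ã‖ ≤ C‖A‖. -/
/-!
Each row and each column of the matrix of `A` has `ℓ²`-norm at most `‖A‖`, being `A eⱼ` resp.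
`A* eᵢ` up to conjugation. Cauchy–Schwarz against the square-summable weights `(1 + |n|)⁻¹`
therefore bounds every row and column `ℓ¹`-sum of `Ã` by `‖A‖ √S` with `S = ∑_{n ∈ ℤ} (1 + |n|)⁻²`,
and the Schur test turns these bounds into `‖Ã‖ ≤ √S ‖A‖`.
-/

/-- The Hilbert space `ℓ²` of square-summable complex sequences indexed by `ℕ⁺`. -/
noncomputable abbrev ell2 : Type := lp (fun _ : ℕ+ => ℂ) 2

/-- The matrix entry `A_i^j` of a bounded operator `A` on `ℓ²`. -/
noncomputable def entry (A : ell2 →L[ℂ] ell2) (i j : ℕ+) : ℂ :=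
  (A (lp.single 2 j 1) : ∀ _ : ℕ+, ℂ) i

open scoped ENNReal NNReal ComplexConjugate

namespace ENNReal

variable {ι κ : Type*}

theorem tsum_sq_le_tsum_mul_tsum_of_sq_le_mul {r f g : ι → ℝ≥0} (h : ∀ i, r i ^ 2 ≤ f i * g i) :
    (∑' i, (r i : ℝ≥0∞)) ^ 2 ≤ (∑' i, (f i : ℝ≥0∞)) * ∑' i, (g i : ℝ≥0∞) := by
  refine le_of_tendsto' (((ENNReal.continuous_pow 2).tendsto _).comp ENNReal.summable.hasSum)
    fun s => ?_
  calc (∑ i ∈ s, (r i : ℝ≥0∞)) ^ 2 = ((∑ i ∈ s, r i) ^ 2 : ℝ≥0) := by push_cast; rfl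
    _ ≤ ((∑ i ∈ s, f i) * ∑ i ∈ s, g i : ℝ≥0) := coe_le_coe.2 <|
        Finset.sum_sq_le_sum_mul_sum_of_sq_le_mul s (fun _ _ => zero_le)
          (fun _ _ => zero_le) fun i _ => h i
    _ = (∑ i ∈ s, (f i : ℝ≥0∞)) * ∑ i ∈ s, (g i : ℝ≥0∞) := by push_cast; rfl
    _ ≤ _ := by gcongr <;> exact ENNReal.sum_le_tsum s

theorem tsum_mul_le_of_tsum_sq_le {f g : ι → ℝ≥0} {a b : ℝ≥0∞}
    (hf : ∑' i, (f i : ℝ≥0∞) ^ 2 ≤ a ^ 2) (hg : ∑' i, (g i : ℝ≥0∞) ^ 2 ≤ b ^ 2) :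
    ∑' i, (f i * g i : ℝ≥0∞) ≤ a * b := by
  refine (ENNReal.pow_le_pow_left_iff two_ne_zero).1 ?_
  have := tsum_sq_le_tsum_mul_tsum_of_sq_le_mul (r := fun i => f i * g i)
    (f := fun i => f i ^ 2) (g := fun i => g i ^ 2) fun i => (mul_pow _ _ _).le
  push_cast at this
  exact this.trans ((mul_le_mul' hf hg).trans_eq (mul_pow _ _ _).symm)

/-- **Schur test**. -/
theorem tsum_sq_tsum_mul_le_of_tsum_le (K : ι → κ → ℝ≥0) (x : κ → ℝ≥0) {R C : ℝ≥0∞}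
    (hrow : ∀ i, ∑' j, (K i j : ℝ≥0∞) ≤ R) (hcol : ∀ j, ∑' i, (K i j : ℝ≥0∞) ≤ C) :
    ∑' i, (∑' j, (K i j * x j : ℝ≥0∞)) ^ 2 ≤ R * C * ∑' j, (x j : ℝ≥0∞) ^ 2 := by
  have hrow_sq (i : ι) :
      (∑' j, (K i j * x j : ℝ≥0∞)) ^ 2 ≤ R * ∑' j, (K i j * x j ^ 2 : ℝ≥0∞) := by
    -- Cauchy–Schwarz for the splitting `K x = √K · (√K x)`
    have := tsum_sq_le_tsum_mul_tsum_of_sq_le_mul (r := fun j => K i j * x j) (f := K i)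
      (g := fun j => K i j * x j ^ 2) fun j => by ring_nf; rfl
    push_cast at this
    exact this.trans (by gcongr; exact hrow i)
  calc ∑' i, (∑' j, (K i j * x j : ℝ≥0∞)) ^ 2
      ≤ ∑' i, R * ∑' j, (K i j * x j ^ 2 : ℝ≥0∞) := ENNReal.tsum_le_tsum hrow_sq
    _ = R * ∑' j, (∑' i, (K i j : ℝ≥0∞)) * x j ^ 2 := by
      rw [ENNReal.tsum_mul_left, ENNReal.tsum_comm]
      simp_rw [ENNReal.tsum_mul_right]
    _ ≤ R * ∑' j, C * x j ^ 2 := by gcongr with j; exact hcol j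
    _ = R * C * ∑' j, (x j : ℝ≥0∞) ^ 2 := by rw [ENNReal.tsum_mul_left, mul_assoc]

end ENNReal

section lp

variable {ι : Type*} {E : ι → Type*} [∀ i, NormedAddCommGroup (E i)]

theorem memℓp_two_of_tsum_enorm_sq_ne_top {f : ∀ i, E i} (h : ∑' i, ‖f i‖ₑ ^ 2 ≠ ∞) :
    Memℓp f 2 := by
  refine memℓp_gen ?_
  have : Summable fun i => ‖f i‖₊ ^ 2 :=
    ENNReal.tsum_coe_ne_top_iff_summable.1 (by simpa [enorm_eq_nnnorm] using h)
  simpa using NNReal.summable_coe.2 this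

theorem lp.tsum_enorm_sq (f : lp E 2) : ∑' i, ‖f i‖ₑ ^ 2 = ‖f‖ₑ ^ 2 := by
  have h : HasSum (fun i => ‖f i‖₊ ^ 2) (‖f‖₊ ^ 2) := by
    rw [← NNReal.hasSum_coe]
    simpa using lp.hasSum_norm (p := 2) (by norm_num) f
  simpa [enorm_eq_nnnorm] using (ENNReal.hasSum_coe.2 h).tsum_eq

theorem lp.norm_le_of_tsum_enorm_sq_le (f : lp E 2) {C : ℝ≥0} (h : ∑' i, ‖f i‖ₑ ^ 2 ≤ C ^ 2) :
    ‖f‖ ≤ C := by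
  rw [lp.tsum_enorm_sq, ENNReal.pow_le_pow_left_iff two_ne_zero] at h
  exact_mod_cast (ENNReal.coe_le_coe.1 h : ‖f‖₊ ≤ C)

end lp

section SchurOperator

variable {ι 𝕜 : Type*} [NontriviallyNormedField 𝕜] {K : ι → ι → 𝕜} {R : ℝ≥0}

theorem tsum_sq_tsum_enorm_mul_le (hrow : ∀ i, ∑' j, ‖K i j‖ₑ ≤ R)
    (hcol : ∀ j, ∑' i, ‖K i j‖ₑ ≤ R) (x : lp (fun _ : ι => 𝕜) 2) :
    ∑' i, (∑' j, ‖K i j‖ₑ * ‖x j‖ₑ) ^ 2 ≤ (R * ‖x‖₊ : ℝ≥0) ^ 2 := by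
  have hx : ∑' j, (‖x j‖₊ : ℝ≥0∞) ^ 2 = ‖x‖₊ ^ 2 := lp.tsum_enorm_sq x
  refine (ENNReal.tsum_sq_tsum_mul_le_of_tsum_le (fun i j => ‖K i j‖₊) (fun j => ‖x j‖₊)
    hrow hcol).trans_eq ?_
  rw [hx]
  push_cast
  ring

theorem summable_mul_apply [CompleteSpace 𝕜] (hrow : ∀ i, ∑' j, ‖K i j‖ₑ ≤ R)
    (hcol : ∀ j, ∑' i, ‖K i j‖ₑ ≤ R) (x : lp (fun _ : ι => 𝕜) 2) (i : ι) :
    Summable fun j => K i j * x j := by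
  refine Summable.of_enorm (ne_top_of_le_ne_top (b := (R * ‖x‖₊ : ℝ≥0)) ENNReal.coe_ne_top ?_)
  rw [← ENNReal.pow_le_pow_left_iff two_ne_zero]
  simp only [enorm_mul]
  exact (ENNReal.le_tsum i).trans (tsum_sq_tsum_enorm_mul_le hrow hcol x)

theorem tsum_enorm_sq_tsum_mul_le (hrow : ∀ i, ∑' j, ‖K i j‖ₑ ≤ R)
    (hcol : ∀ j, ∑' i, ‖K i j‖ₑ ≤ R) (x : lp (fun _ : ι => 𝕜) 2) :
    ∑' i, ‖∑' j, K i j * x j‖ₑ ^ 2 ≤ (R * ‖x‖₊ : ℝ≥0) ^ 2 := by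
  refine le_trans ?_ (tsum_sq_tsum_enorm_mul_le hrow hcol x)
  gcongr with i
  simpa only [enorm_mul] using enorm_tsum_le_tsum_enorm (f := fun j => K i j * x j)

theorem lp.exists_clm_apply_eq_tsum_of_tsum_enorm_le [CompleteSpace 𝕜]
    (hrow : ∀ i, ∑' j, ‖K i j‖ₑ ≤ R) (hcol : ∀ j, ∑' i, ‖K i j‖ₑ ≤ R) :
    ∃ B : lp (fun _ : ι => 𝕜) 2 →L[𝕜] lp (fun _ : ι => 𝕜) 2,
      (∀ x i, B x i = ∑' j, K i j * x j) ∧ ‖B‖ ≤ R := by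
  let B : lp (fun _ : ι => 𝕜) 2 →ₗ[𝕜] lp (fun _ : ι => 𝕜) 2 :=
    { toFun x := ⟨fun i => ∑' j, K i j * x j, memℓp_two_of_tsum_enorm_sq_ne_top
        (ne_top_of_le_ne_top (by finiteness) (tsum_enorm_sq_tsum_mul_le hrow hcol x))⟩
      map_add' x y := by
        ext i
        change ∑' j, K i j * (x + y) j = ∑' j, K i j * x j + ∑' j, K i j * y j
        rw [← (summable_mul_apply hrow hcol x i).tsum_add (summable_mul_apply hrow hcol y i)]
        simp [mul_add]
      map_smul' c x := by
        ext i
        change ∑' j, K i j * (c • x) j = c * ∑' j, K i j * x j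
        rw [← (summable_mul_apply hrow hcol x i).tsum_mul_left]
        simp [mul_left_comm _ c] }
  refine ⟨B.mkContinuous R fun x => ?_, fun x i => rfl,
    LinearMap.mkContinuous_norm_le _ R.coe_nonneg _⟩
  simpa using lp.norm_le_of_tsum_enorm_sq_le (B x) (tsum_enorm_sq_tsum_mul_le hrow hcol x)

end SchurOperator

theorem entry_eq_of_apply_eq_tsum {B : ell2 →L[ℂ] ell2} {K : ℕ+ → ℕ+ → ℂ}
    (hB : ∀ x i, B x i = ∑' j, K i j * x j) (i j : ℕ+) : entry B i j = K i j := by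
  rw [entry, hB, tsum_eq_single j fun j' hj' => by rw [lp.single_apply_ne 2 j _ hj', mul_zero],
    lp.single_apply_self, mul_one]

theorem entry_eq_conj_adjoint_apply (A : ell2 →L[ℂ] ell2) (i j : ℕ+) :
    entry A i j = conj (ContinuousLinearMap.adjoint A (lp.single 2 i 1) j) := by
  have := ContinuousLinearMap.adjoint_inner_left A (lp.single 2 j 1) (lp.single 2 i 1)
  rw [lp.inner_single_left, lp.inner_single_right] at this
  simpa [entry] using this.symm

theorem enorm_apply_single_le (T : ell2 →L[ℂ] ell2) (j : ℕ+) :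
    ‖T (lp.single 2 j 1)‖ₑ ≤ ‖T‖ₑ := by
  have h : ‖(lp.single 2 j 1 : ell2)‖₊ = 1 := by ext; simp [lp.norm_single]
  simpa [enorm_eq_nnnorm, h] using T.le_opENorm (lp.single 2 j 1)

theorem tsum_enorm_sq_entry_col_le (A : ell2 →L[ℂ] ell2) (j : ℕ+) :
    ∑' i, ‖entry A i j‖ₑ ^ 2 ≤ ‖A‖ₑ ^ 2 := by
  rw [show ∑' i, ‖entry A i j‖ₑ ^ 2 = _ from lp.tsum_enorm_sq (A (lp.single 2 j 1))]
  gcongr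
  exact enorm_apply_single_le A j

theorem tsum_enorm_sq_entry_row_le (A : ell2 →L[ℂ] ell2) (i : ℕ+) :
    ∑' j, ‖entry A i j‖ₑ ^ 2 ≤ ‖A‖ₑ ^ 2 := by
  simp_rw [entry_eq_conj_adjoint_apply, RCLike.enorm_conj]
  rw [lp.tsum_enorm_sq, ← (ContinuousLinearMap.adjoint (𝕜 := ℂ)).enorm_map A]
  gcongr
  exact enorm_apply_single_le _ i

noncomputable def decayWeight (n : ℤ) : ℝ≥0 := (1 + ‖n‖₊)⁻¹

theorem decayWeight_neg (n : ℤ) : decayWeight (-n) = decayWeight n := by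
  simp [decayWeight]

theorem summable_decayWeight_sq : Summable fun n => decayWeight n ^ 2 := by
  have hnat : Summable fun n : ℕ => (decayWeight n ^ 2 : ℝ) :=
    ((summable_nat_add_iff 1).2 (Real.summable_nat_pow_inv.2 one_lt_two)).congr fun n => by
      simp [decayWeight, add_comm, inv_pow]
  rw [← NNReal.summable_coe]
  exact .of_nat_of_neg (by simpa using hnat) (by simpa [decayWeight_neg] using hnat)

noncomputable def decayWeightSqSum : ℝ≥0 := ∑' n, decayWeight n ^ 2

theorem one_le_decayWeightSqSum : 1 ≤ decayWeightSqSum := by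
  calc 1 = decayWeight 0 ^ 2 := by simp [decayWeight]
    _ ≤ decayWeightSqSum := summable_decayWeight_sq.le_tsum 0 fun _ _ => zero_le

theorem tsum_decayWeight_sq_sub_le (j : ℕ+) :
    ∑' i : ℕ+, (decayWeight (i - j) : ℝ≥0∞) ^ 2 ≤ decayWeightSqSum := by
  rw [decayWeightSqSum, ENNReal.coe_tsum summable_decayWeight_sq]
  push_cast
  exact ENNReal.tsum_comp_le_tsum_of_injective (f := fun i : ℕ+ => (i : ℤ) - j)
    (fun a b h => by simpa using h) fun n => (decayWeight n : ℝ≥0∞) ^ 2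

theorem enorm_norm_div_one_add_abs_sub (z : ℂ) (i j : ℕ+) :
    ‖((‖z‖ / (1 + |(i:ℝ) - (j:ℝ)|) : ℝ) : ℂ)‖ₑ = ‖z‖ₑ * decayWeight (i - j) := by
  simp only [enorm_eq_nnnorm, ← ENNReal.coe_mul, ENNReal.coe_inj]
  ext
  rw [coe_nnnorm, Complex.norm_real, Real.norm_of_nonneg (by positivity)]
  simp [decayWeight, div_eq_mul_inv, Int.norm_eq_abs]

theorem tsum_enorm_entry_mul_decayWeight_row_le (A : ell2 →L[ℂ] ell2) (i : ℕ+) :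
    ∑' j, ‖entry A i j‖ₑ * decayWeight (i - j) ≤ ‖A‖ₑ * NNReal.sqrt decayWeightSqSum := by
  refine ENNReal.tsum_mul_le_of_tsum_sq_le (f := fun j => ‖entry A i j‖₊)
    (tsum_enorm_sq_entry_row_le A i) ?_
  rw [← ENNReal.coe_pow, NNReal.sq_sqrt]
  simpa only [← decayWeight_neg (i - _), neg_sub] using tsum_decayWeight_sq_sub_le i

theorem tsum_enorm_entry_mul_decayWeight_col_le (A : ell2 →L[ℂ] ell2) (j : ℕ+) :
    ∑' i, ‖entry A i j‖ₑ * decayWeight (i - j) ≤ ‖A‖ₑ * NNReal.sqrt decayWeightSqSum := by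
  refine ENNReal.tsum_mul_le_of_tsum_sq_le (f := fun i => ‖entry A i j‖₊)
    (tsum_enorm_sq_entry_col_le A j) ?_
  rw [← ENNReal.coe_pow, NNReal.sq_sqrt]
  exact tsum_decayWeight_sq_sub_le j

/-- There is an absolute constant `C` such that for every bounded operator `A` on `ℓ²`,
the matrix `Ã_i^j = |A_i^j|/(1+|i-j|)` defines a bounded operator on `ℓ²` with
`‖Ã‖ ≤ C‖A‖`. -/
theorem stmt3 : ∃ C : ℝ, 0 < C ∧ ∀ A : ell2 →L[ℂ] ell2,
    ∃ B : ell2 →L[ℂ] ell2,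
      (∀ i j : ℕ+, entry B i j = ((‖entry A i j‖ / (1 + |(i:ℝ) - (j:ℝ)|) : ℝ) : ℂ)) ∧
      ‖B‖ ≤ C * ‖A‖ := by
  have hC : 0 < NNReal.sqrt decayWeightSqSum :=
    NNReal.sqrt_pos.2 (one_pos.trans_le one_le_decayWeightSqSum)
  refine ⟨NNReal.sqrt decayWeightSqSum, hC, fun A => ?_⟩
  obtain ⟨B, hB, hB_norm⟩ := lp.exists_clm_apply_eq_tsum_of_tsum_enorm_le
    (K := fun i j => ((‖entry A i j‖ / (1 + |(i:ℝ) - (j:ℝ)|) : ℝ) : ℂ))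
    (R := ‖A‖₊ * NNReal.sqrt decayWeightSqSum)
    (fun i => by
      simp only [enorm_norm_div_one_add_abs_sub, ENNReal.coe_mul]
      exact tsum_enorm_entry_mul_decayWeight_row_le A i)
    (fun j => by
      simp only [enorm_norm_div_one_add_abs_sub, ENNReal.coe_mul]
      exact tsum_enorm_entry_mul_decayWeight_col_le A j)
  exact ⟨B, entry_eq_of_apply_eq_tsum hB, hB_norm.trans_eq (by push_cast; ring)⟩
end

section
/- Let A be a bounded operator on ℓ² such that the commutator [N,A] is also bounded, where N = diag(1,2,3,...). Then for every s ∈ [-2,2], A extends to a bounded operator on the weighted space ℓ²_s, and there exists a constant C (independent of A and s) such that ‖A‖_{B(ℓ²_s)} ≤ C·max{‖A‖, ‖[N,A]‖}. -/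
/-!
Complex interpolation between the weights `i^{-2}` and `i^2`. For finitely supported `x, y` the
form `c ↦ ⟪y, N^c A N^{-c} x⟫` is entire and bounded on the strip `|re c| ≤ 1`. On its edges
`N^c A N^{-c} = N^{c-1} (A + [N,A] N⁻¹) N^{1-c} = N^{c+1} (A - N⁻¹ [N,A]) N^{-c-1}`, where the outer
factors are contractions, so there the form is at most `(‖A‖ + ‖[N,A]‖) ‖x‖ ‖y‖`; by the three
lines theorem the same bound holds on the whole strip. At `c = s/2` this is the bound on `ℓ²_s`
with `C = 2` for finitely supported vectors, and truncation extends it to all of `ℓ²`.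
-/

open scoped ENNReal NNReal

open scoped ComplexConjugate InnerProductSpace
open Complex Complex.HadamardThreeLines Finset Filter Topology

theorem lp.continuous_apply {α : Type*} {E : α → Type*} [∀ i, NormedAddCommGroup (E i)]
    {p : ℝ≥0∞} [Fact (1 ≤ p)] (i : α) : Continuous fun f : lp E p => f i :=
  (_root_.continuous_apply i).comp lp.uniformContinuous_coe.continuous

theorem norm_le_of_mem_verticalClosedStrip_of_edges {E : Type*} [NormedAddCommGroup E]
    [NormedSpace ℂ E] {f : ℂ → E} {l u a : ℝ} (hlu : l < u)
    (hd : DiffContOnCl ℂ f (verticalStrip l u))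
    (hB : BddAbove ((norm ∘ f) '' verticalClosedStrip l u))
    (hl : ∀ z ∈ re ⁻¹' {l}, ‖f z‖ ≤ a) (hu : ∀ z ∈ re ⁻¹' {u}, ‖f z‖ ≤ a) {z : ℂ}
    (hz : z ∈ verticalClosedStrip l u) : ‖f z‖ ≤ a := by
  have ha : 0 ≤ a := (norm_nonneg _).trans (hl l (by simp))
  calc ‖f z‖ ≤ a ^ (1 - (z.re - l) / (u - l)) * a ^ ((z.re - l) / (u - l)) :=
        norm_le_interp_of_mem_verticalClosedStrip' hlu hz hd hB hl hu
    _ = a := by rw [← Real.rpow_add' ha (by norm_num), sub_add_cancel, Real.rpow_one]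

theorem norm_natCast_cpow_le {n : ℕ} (hn : 0 < n) {c : ℂ} {r : ℝ} (hc : c.re ≤ r) :
    ‖(n : ℂ) ^ c‖ ≤ (n : ℝ) ^ r := by
  rw [norm_natCast_cpow_of_pos hn]
  exact Real.rpow_le_rpow_of_exponent_le (mod_cast hn) hc

theorem norm_natCast_cpow_mul_le {n : ℕ} (hn : 0 < n) {c : ℂ} (hc : c.re ≤ 0) (z : ℂ) :
    ‖(n : ℂ) ^ c * z‖ ≤ ‖z‖ := by
  rw [norm_mul]
  exact mul_le_of_le_one_left (norm_nonneg z)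
    ((norm_natCast_cpow_le hn hc).trans_eq (Real.rpow_zero _))

theorem norm_conj_natCast_cpow_mul_le {n : ℕ} (hn : 0 < n) {c : ℂ} (hc : c.re ≤ 0) (z : ℂ) :
    ‖conj ((n : ℂ) ^ c) * z‖ ≤ ‖z‖ := by
  simpa only [norm_mul, RCLike.norm_conj] using norm_natCast_cpow_mul_le hn hc z

theorem natCast_cpow_ofReal (n : ℕ) (t : ℝ) : (n : ℂ) ^ (t : ℂ) = ((n : ℝ) ^ t : ℝ) := by
  rw [← ofReal_natCast, ofReal_cpow n.cast_nonneg]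

theorem natCast_rpow_mul_nnnorm_sq {n : ℕ} (hn : 0 < n) (s : ℝ) (z : ℂ) :
    (n : ℝ≥0∞) ^ s * (‖z‖₊ : ℝ≥0∞) ^ 2 = ENNReal.ofReal ((n : ℝ) ^ s * ‖z‖ ^ 2) := by
  rw [ENNReal.ofReal_mul (by positivity), ← ENNReal.ofReal_natCast,
    ENNReal.ofReal_rpow_of_pos (mod_cast hn), ENNReal.ofReal_pow (norm_nonneg _), ofReal_norm,
    enorm_eq_nnnorm]

noncomputable def truncate (G : Finset ℕ+) (x : ℕ+ → ℂ) : ell2 :=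
  ∑ j ∈ G, lp.single 2 j (x j)

theorem norm_truncate_sq (G : Finset ℕ+) (x : ℕ+ → ℂ) :
    ‖truncate G x‖ ^ 2 = ∑ j ∈ G, ‖x j‖ ^ 2 := by
  have := lp.norm_sum_single (E := fun _ : ℕ+ => ℂ) (p := 2) (by norm_num) x G
  simpa [truncate] using this

theorem norm_truncate_le_of_norm_le {G : Finset ℕ+} {x x' : ℕ+ → ℂ}
    (h : ∀ j, ‖x' j‖ ≤ ‖x j‖) : ‖truncate G x'‖ ≤ ‖truncate G x‖ := by
  rw [← pow_le_pow_iff_left₀ (norm_nonneg _) (norm_nonneg _) two_ne_zero, norm_truncate_sq,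
    norm_truncate_sq]
  gcongr with j
  exact h j

theorem apply_truncate_apply (T : ell2 →L[ℂ] ell2) (G : Finset ℕ+) (x : ℕ+ → ℂ) (i : ℕ+) :
    (T (truncate G x) : ∀ _ : ℕ+, ℂ) i = ∑ j ∈ G, entry T i j * x j := by
  have hsingle (j : ℕ+) : lp.single 2 j (x j) = x j • (lp.single 2 j 1 : ell2) := by
    rw [← lp.single_smul, smul_eq_mul, mul_one]
  rw [truncate, map_sum, lp.coeFn_sum, Finset.sum_apply]
  refine sum_congr rfl fun j _ => ?_
  rw [hsingle, map_smul, lp.coeFn_smul, Pi.smul_apply, smul_eq_mul, entry, mul_comm]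

theorem inner_truncate_apply_truncate (T : ell2 →L[ℂ] ell2) (F G : Finset ℕ+) (x y : ℕ+ → ℂ) :
    ⟪truncate F y, T (truncate G x)⟫_ℂ = ∑ i ∈ F, ∑ j ∈ G, conj (y i) * entry T i j * x j := by
  rw [truncate, sum_inner]
  refine sum_congr rfl fun i _ => ?_
  rw [lp.inner_single_left, apply_truncate_apply, RCLike.inner_apply', mul_sum]
  simp only [mul_assoc]

theorem norm_inner_truncate_apply_truncate_le (T : ell2 →L[ℂ] ell2) {F G : Finset ℕ+}
    {x x' y y' : ℕ+ → ℂ} (hx : ∀ j, ‖x' j‖ ≤ ‖x j‖) (hy : ∀ i, ‖y' i‖ ≤ ‖y i‖) :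
    ‖⟪truncate F y', T (truncate G x')⟫_ℂ‖ ≤ ‖T‖ * ‖truncate G x‖ * ‖truncate F y‖ :=
  calc _ ≤ ‖truncate F y'‖ * ‖T (truncate G x')‖ := norm_inner_le_norm _ _
    _ ≤ ‖truncate F y‖ * (‖T‖ * ‖truncate G x‖) := by
      gcongr
      · exact norm_truncate_le_of_norm_le hy
      · exact T.le_opNorm_of_le (norm_truncate_le_of_norm_le hx)
    _ = _ := by ring

theorem norm_inner_add_inner_truncate_le (A B : ell2 →L[ℂ] ell2) {F G : Finset ℕ+}
    {x x₁ x₂ y y₁ y₂ : ℕ+ → ℂ} (hx₁ : ∀ j, ‖x₁ j‖ ≤ ‖x j‖) (hx₂ : ∀ j, ‖x₂ j‖ ≤ ‖x j‖)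
    (hy₁ : ∀ i, ‖y₁ i‖ ≤ ‖y i‖) (hy₂ : ∀ i, ‖y₂ i‖ ≤ ‖y i‖) :
    ‖⟪truncate F y₁, A (truncate G x₁)⟫_ℂ + ⟪truncate F y₂, B (truncate G x₂)⟫_ℂ‖ ≤
      (‖A‖ + ‖B‖) * ‖truncate G x‖ * ‖truncate F y‖ :=
  calc _ ≤ ‖A‖ * ‖truncate G x‖ * ‖truncate F y‖ + ‖B‖ * ‖truncate G x‖ * ‖truncate F y‖ :=
        norm_add_le_of_le (norm_inner_truncate_apply_truncate_le A hx₁ hy₁)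
          (norm_inner_truncate_apply_truncate_le B hx₂ hy₂)
    _ = _ := by ring

/-- The form `⟪y, N^c A N^{-c} x⟫` of finitely supported vectors, `N = diag(1,2,3,…)`. -/
noncomputable def twistedForm (A : ell2 →L[ℂ] ell2) (F G : Finset ℕ+) (x y : ℕ+ → ℂ) (c : ℂ) :
    ℂ :=
  ∑ i ∈ F, ∑ j ∈ G, conj (y i) * ((i : ℂ) ^ c * entry A i j * (j : ℂ) ^ (-c)) * x j

theorem differentiable_twistedForm (A : ell2 →L[ℂ] ell2) (F G : Finset ℕ+) (x y : ℕ+ → ℂ) :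
    Differentiable ℂ (twistedForm A F G x y) := by
  unfold twistedForm
  refine Differentiable.fun_sum fun i _ => Differentiable.fun_sum fun j _ => ?_
  have hi : (i : ℂ) ≠ 0 := by exact_mod_cast i.ne_zero
  have hj : (j : ℂ) ≠ 0 := by exact_mod_cast j.ne_zero
  fun_prop (disch := simp [hi, hj])

theorem bddAbove_norm_twistedForm (A : ell2 →L[ℂ] ell2) (F G : Finset ℕ+) (x y : ℕ+ → ℂ) :
    BddAbove ((norm ∘ twistedForm A F G x y) '' verticalClosedStrip (-1) 1) := by
  refine ⟨∑ i ∈ F, ∑ j ∈ G, ‖y i‖ * ((i : ℝ) * ‖entry A i j‖ * (j : ℝ)) * ‖x j‖, ?_⟩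
  rintro _ ⟨c, hc, rfl⟩
  refine (norm_sum_le _ _).trans (sum_le_sum fun i _ => ?_)
  refine (norm_sum_le _ _).trans (sum_le_sum fun j _ => ?_)
  simp only [norm_mul, RCLike.norm_conj]
  gcongr
  · exact (norm_natCast_cpow_le i.pos hc.2).trans_eq (Real.rpow_one _)
  · refine (norm_natCast_cpow_le j.pos ?_).trans_eq (Real.rpow_one _)
    rw [neg_re]
    linarith [hc.1]

section Commutator

variable {A B : ell2 →L[ℂ] ell2}
  (hAB : ∀ i j : ℕ+, entry B i j = ((i : ℂ) - (j : ℂ)) * entry A i j)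
include hAB

theorem norm_twistedForm_le_of_re_eq_one (F G : Finset ℕ+) (x y : ℕ+ → ℂ) {c : ℂ}
    (hc : c.re = 1) :
    ‖twistedForm A F G x y c‖ ≤ (‖A‖ + ‖B‖) * ‖truncate G x‖ * ‖truncate F y‖ := by
  -- `i^c A_ij j^{-c} = i^{c-1} (A_ij + B_ij / j) j^{1-c}`
  have key : twistedForm A F G x y c =
      ⟪truncate F (fun i => conj ((i : ℂ) ^ (c - 1)) * y i),
        A (truncate G (fun j => (j : ℂ) ^ (1 - c) * x j))⟫_ℂ +
      ⟪truncate F (fun i => conj ((i : ℂ) ^ (c - 1)) * y i),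
        B (truncate G (fun j => (j : ℂ) ^ (-c) * x j))⟫_ℂ := by
    simp only [inner_truncate_apply_truncate, twistedForm, ← sum_add_distrib, hAB]
    refine sum_congr rfl fun i _ => sum_congr rfl fun j _ => ?_
    have hi : (i : ℂ) ≠ 0 := by exact_mod_cast i.ne_zero
    have hj : (j : ℂ) ≠ 0 := by exact_mod_cast j.ne_zero
    simp only [map_mul, conj_conj, cpow_sub _ _ hi, cpow_sub _ _ hj, cpow_neg, cpow_one]
    field_simp
    ring
  rw [key]
  exact norm_inner_add_inner_truncate_le A B
    (fun j => norm_natCast_cpow_mul_le j.pos (by simp [hc]) _)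
    (fun j => norm_natCast_cpow_mul_le j.pos (by simp [hc]) _)
    (fun i => norm_conj_natCast_cpow_mul_le i.pos (by simp [hc]) _)
    (fun i => norm_conj_natCast_cpow_mul_le i.pos (by simp [hc]) _)

theorem norm_twistedForm_le_of_re_eq_neg_one (F G : Finset ℕ+) (x y : ℕ+ → ℂ) {c : ℂ}
    (hc : c.re = -1) :
    ‖twistedForm A F G x y c‖ ≤ (‖A‖ + ‖B‖) * ‖truncate G x‖ * ‖truncate F y‖ := by
  -- `i^c A_ij j^{-c} = i^{c+1} (A_ij - B_ij / i) j^{-c-1}`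
  have key : twistedForm A F G x y c =
      ⟪truncate F (fun i => conj ((i : ℂ) ^ (c + 1)) * y i),
        A (truncate G (fun j => (j : ℂ) ^ (-c - 1) * x j))⟫_ℂ +
      ⟪truncate F (fun i => conj ((i : ℂ) ^ c) * -y i),
        B (truncate G (fun j => (j : ℂ) ^ (-c - 1) * x j))⟫_ℂ := by
    simp only [inner_truncate_apply_truncate, twistedForm, ← sum_add_distrib, hAB]
    refine sum_congr rfl fun i _ => sum_congr rfl fun j _ => ?_
    have hi : (i : ℂ) ≠ 0 := by exact_mod_cast i.ne_zero
    have hj : (j : ℂ) ≠ 0 := by exact_mod_cast j.ne_zero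
    simp only [map_mul, map_neg, conj_conj, cpow_add _ _ hi, cpow_sub _ _ hj, cpow_neg, cpow_one]
    field_simp
    ring
  rw [key]
  exact norm_inner_add_inner_truncate_le A B
    (fun j => norm_natCast_cpow_mul_le j.pos (by simp [hc]) _)
    (fun j => norm_natCast_cpow_mul_le j.pos (by simp [hc]) _)
    (fun i => norm_conj_natCast_cpow_mul_le i.pos (by simp [hc]) _)
    (fun i => (norm_conj_natCast_cpow_mul_le i.pos (by simp [hc]) _).trans_eq (norm_neg _))

theorem norm_twistedForm_le (F G : Finset ℕ+) (x y : ℕ+ → ℂ) {c : ℂ}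
    (hc : c.re ∈ Set.Icc (-1) 1) :
    ‖twistedForm A F G x y c‖ ≤ (‖A‖ + ‖B‖) * ‖truncate G x‖ * ‖truncate F y‖ :=
  norm_le_of_mem_verticalClosedStrip_of_edges (by norm_num)
    (differentiable_twistedForm A F G x y).diffContOnCl (bddAbove_norm_twistedForm A F G x y)
    (fun _ hz => norm_twistedForm_le_of_re_eq_neg_one hAB F G x y hz)
    (fun _ hz => norm_twistedForm_le_of_re_eq_one hAB F G x y hz) hc

theorem sum_weighted_norm_sq_apply_truncate_le {s : ℝ} (hs : s ∈ Set.Icc (-2) 2)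
    (F G : Finset ℕ+) (x : ℕ+ → ℂ) :
    ∑ i ∈ F, (i : ℝ) ^ s * ‖(A (truncate G x) : ∀ _ : ℕ+, ℂ) i‖ ^ 2 ≤
      (‖A‖ + ‖B‖) ^ 2 * ∑ j ∈ G, (j : ℝ) ^ s * ‖x j‖ ^ 2 := by
  set v : ℕ+ → ℂ := (A (truncate G x) : ∀ _ : ℕ+, ℂ)
  set w : ℕ+ → ℂ := fun n => (((n : ℕ) : ℝ) ^ (s / 2) : ℝ)
  have hw_ne (n : ℕ+) : w n ≠ 0 := by
    simp only [w, ofReal_ne_zero]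
    exact (Real.rpow_pos_of_pos (mod_cast n.pos) _).ne'
  have hw_norm (n : ℕ+) (z : ℂ) : ‖w n * z‖ ^ 2 = (n : ℝ) ^ s * ‖z‖ ^ 2 := by
    have hn : (0 : ℝ) < n := mod_cast n.pos
    rw [norm_mul, mul_pow, norm_real, Real.norm_of_nonneg (Real.rpow_nonneg hn.le _), sq,
      ← Real.rpow_add hn, add_halves]
  set y : ℕ+ → ℂ := fun i => w i * v i
  set x' : ℕ+ → ℂ := fun j => w j * x j
  have hy : ‖truncate F y‖ ^ 2 = ∑ i ∈ F, (i : ℝ) ^ s * ‖v i‖ ^ 2 := by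
    simp only [norm_truncate_sq, y, hw_norm]
  have hx' : ‖truncate G x'‖ ^ 2 = ∑ j ∈ G, (j : ℝ) ^ s * ‖x j‖ ^ 2 := by
    simp only [norm_truncate_sq, x', hw_norm]
  have key : ((‖truncate F y‖ ^ 2 : ℝ) : ℂ) = twistedForm A F G x' y (s / 2 : ℝ) := by
    rw [norm_truncate_sq, ofReal_sum]
    refine sum_congr rfl fun i _ => ?_
    have hyi : y i = w i * ∑ j ∈ G, entry A i j * x j := by
      simp only [y, v, apply_truncate_apply]
    rw [ofReal_pow, ← conj_mul']
    nth_rw 2 [hyi]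
    rw [mul_sum, mul_sum]
    refine sum_congr rfl fun j _ => ?_
    have hwj : ((((j : ℕ) : ℝ) ^ (s / 2) : ℝ) : ℂ) ≠ 0 := hw_ne j
    simp only [x', w, cpow_neg, natCast_cpow_ofReal]
    field_simp
  have hle : ‖truncate F y‖ ^ 2 ≤ (‖A‖ + ‖B‖) * ‖truncate G x'‖ * ‖truncate F y‖ := by
    have hc : ((s / 2 : ℝ) : ℂ).re ∈ Set.Icc (-1) 1 := by
      rw [ofReal_re]
      constructor <;> linarith [hs.1, hs.2]
    have := norm_twistedForm_le hAB F G x' y hc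
    rwa [← key, norm_real, Real.norm_of_nonneg (sq_nonneg _)] at this
  rw [← hy, ← hx', ← mul_pow]
  have : 0 ≤ (‖A‖ + ‖B‖) * ‖truncate G x'‖ := by positivity
  nlinarith [norm_nonneg (truncate F y)]

theorem tsum_weighted_norm_sq_apply_le {s : ℝ} (hs : s ∈ Set.Icc (-2) 2) (u : ell2) :
    ∑' i : ℕ+, ENNReal.ofReal ((i : ℝ) ^ s * ‖(A u : ∀ _ : ℕ+, ℂ) i‖ ^ 2) ≤
      ENNReal.ofReal ((‖A‖ + ‖B‖) ^ 2) *
        ∑' j : ℕ+, ENNReal.ofReal ((j : ℝ) ^ s * ‖(u : ∀ _ : ℕ+, ℂ) j‖ ^ 2) := by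
  rw [ENNReal.tsum_eq_iSup_sum]
  refine iSup_le fun F => ?_
  have hcont : Continuous fun v : ell2 =>
      ∑ i ∈ F, ENNReal.ofReal ((i : ℝ) ^ s * ‖(A v : ∀ _ : ℕ+, ℂ) i‖ ^ 2) := by
    refine continuous_finsetSum _ fun i _ => ENNReal.continuous_ofReal.comp ?_
    exact continuous_const.mul (((lp.continuous_apply i).comp A.continuous).norm.pow 2)
  have hlim : Tendsto (fun G => ∑ i ∈ F,
      ENNReal.ofReal ((i : ℝ) ^ s * ‖(A (truncate G u) : ∀ _ : ℕ+, ℂ) i‖ ^ 2)) atTop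
      (𝓝 (∑ i ∈ F, ENNReal.ofReal ((i : ℝ) ^ s * ‖(A u : ∀ _ : ℕ+, ℂ) i‖ ^ 2))) :=
    (hcont.tendsto u).comp (lp.hasSum_single ENNReal.ofNat_ne_top u)
  refine le_of_tendsto' hlim fun G => ?_
  calc _ = ENNReal.ofReal
          (∑ i ∈ F, (i : ℝ) ^ s * ‖(A (truncate G u) : ∀ _ : ℕ+, ℂ) i‖ ^ 2) :=
        (ENNReal.ofReal_sum_of_nonneg fun _ _ => by positivity).symm
    _ ≤ ENNReal.ofReal
          ((‖A‖ + ‖B‖) ^ 2 * ∑ j ∈ G, (j : ℝ) ^ s * ‖(u : ∀ _ : ℕ+, ℂ) j‖ ^ 2) :=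
        ENNReal.ofReal_le_ofReal (sum_weighted_norm_sq_apply_truncate_le hAB hs F G u)
    _ = ENNReal.ofReal ((‖A‖ + ‖B‖) ^ 2) *
          ∑ j ∈ G, ENNReal.ofReal ((j : ℝ) ^ s * ‖(u : ∀ _ : ℕ+, ℂ) j‖ ^ 2) := by
        rw [ENNReal.ofReal_mul (sq_nonneg _),
          ENNReal.ofReal_sum_of_nonneg fun _ _ => by positivity]
    _ ≤ _ := by gcongr; exact ENNReal.sum_le_tsum G

end Commutator

/-- If `A` is bounded on `ℓ²` together with the commutator `[N,A]` (the operator `NA`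
with entries `(i-j)A_i^j`, `N = diag(1,2,3,…)`), then for every `s ∈ [-2,2]` the
operator `A` is bounded on the weighted space `ℓ²_s` (with weight `i^s`), with norm at
most `C·max{‖A‖,‖[N,A]‖}` for a constant `C` independent of `A` and `s`: for every
`u ∈ ℓ²`, `Σ_i i^s ‖(Au)_i‖² ≤ C²·max{‖A‖,‖[N,A]‖}²·Σ_i i^s ‖u_i‖²`. -/
theorem stmt4 : ∃ C : ℝ, 0 < C ∧ ∀ s : ℝ, s ∈ Set.Icc (-2:ℝ) 2 →
    ∀ A NA : ell2 →L[ℂ] ell2,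
      (∀ i j : ℕ+, entry NA i j = ((i:ℂ) - (j:ℂ)) * entry A i j) →
      ∀ u : ell2,
        (∑' i : ℕ+, ((i:ℕ) : ℝ≥0∞) ^ s * ((‖(A u : ∀ _ : ℕ+, ℂ) i‖₊ : ℝ≥0∞)) ^ 2)
          ≤ ENNReal.ofReal ((C * max ‖A‖ ‖NA‖) ^ 2) *
            ∑' i : ℕ+, ((i:ℕ) : ℝ≥0∞) ^ s * ((‖(u : ∀ _ : ℕ+, ℂ) i‖₊ : ℝ≥0∞)) ^ 2 := by
  refine ⟨2, two_pos, fun s hs A NA hAB u => ?_⟩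
  simp only [natCast_rpow_mul_nnnorm_sq, PNat.pos]
  calc _ ≤ ENNReal.ofReal ((‖A‖ + ‖NA‖) ^ 2) * _ := tsum_weighted_norm_sq_apply_le hAB hs u
    _ ≤ _ := by
      gcongr
      rw [two_mul]
      exact add_le_add (le_max_left _ _) (le_max_right _ _)
end

section
/- Let λ² be an eigenvalue of the Hermite operator H = -d²/dx² + x² and h the corresponding L²-normalized eigenfunction. Then for any δ ∈ [0,1], ‖(1+|x|)^δ h(x)‖_{L²(ℝ)} ≤ C λ^δ for a constant C independent of λ. -/
/-!
Multiplying the equation by `h` and integrating by parts over `[-b, b]` gives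
`∫ h'² + x² h² = λ² ∫ h² + [h h']₋ᵦᵇ`. As `h²` is integrable, `b ↦ h(b)² + h(-b)²` cannot
increase on a whole half-line, so the boundary term is `≤ 0` for arbitrarily large `b`, whence
`∫ x² h² ≤ λ²`. The weight is then handled pointwise: for `0 ≤ δ ≤ 1` and `w, E > 0`,
`w^δ ≤ E^δ + E^(δ-1) w` (compare `w` with `E`), applied to `w = (1 + |x|)² ≤ 2 (1 + x²)` and
`E = λ²`.
-/

open MeasureTheory Set Filter

theorem exists_ge_deriv_nonpos_of_integrableOn_Ioi {ψ : ℝ → ℝ} {B : ℝ}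
    (hψ : Differentiable ℝ ψ) (hψ0 : ∀ x, 0 ≤ ψ x) (hint : IntegrableOn ψ (Ioi B)) :
    ∃ b ≥ B, deriv ψ b ≤ 0 := by
  by_contra! hpos
  have hmono : StrictMonoOn ψ (Ici B) :=
    strictMonoOn_of_deriv_pos (convex_Ici B) hψ.continuous.continuousOn
      fun x hx => hpos x (interior_subset hx)
  set c := ψ (B + 1)
  have hc : 0 < c := (hψ0 B).trans_lt (hmono self_mem_Ici (by simp) (by linarith))
  -- `ψ` stays above the positive constant `c` on a half-line of infinite measure
  have hconst : IntegrableOn (fun _ => c) (Ioi (B + 1)) := by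
    refine (hint.mono_set (Ioi_subset_Ioi (by linarith))).mono' aestronglyMeasurable_const ?_
    filter_upwards [ae_restrict_mem measurableSet_Ioi] with x hx
    rw [Real.norm_of_nonneg hc.le]
    have hxB : B + 1 < x := hx
    exact (hmono (by simp only [mem_Ici]; linarith) (by simp only [mem_Ici]; linarith) hxB).le
  simp [hc.ne'] at hconst

theorem exists_ge_mul_deriv_le_mul_deriv_neg {h : ℝ → ℝ} (hd : Differentiable ℝ h)
    (hint : Integrable (fun x => h x ^ 2)) (B : ℝ) :
    ∃ b ≥ B, h b * deriv h b ≤ h (-b) * deriv h (-b) := by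
  have hderiv : ∀ b, HasDerivAt (fun b => h b ^ 2 + h (-b) ^ 2)
      (2 * (h b * deriv h b - h (-b) * deriv h (-b))) b := fun b => by
    refine (((hd b).hasDerivAt.fun_pow 2).add
      (((hd (-b)).hasDerivAt.comp b (hasDerivAt_neg b)).fun_pow 2)).congr_deriv ?_
    simp only [Function.comp_apply]
    ring
  obtain ⟨b, hbB, hb⟩ := exists_ge_deriv_nonpos_of_integrableOn_Ioi
    (fun b => (hderiv b).differentiableAt) (fun b => by positivity)
    (hint.add hint.comp_neg).integrableOn (B := B)
  rw [(hderiv b).deriv] at hb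
  exact ⟨b, hbB, by linarith⟩

theorem integral_deriv_sq_add_mul_sq_eq {h : ℝ → ℝ} {E : ℝ} (hd1 : Differentiable ℝ h)
    (hd2 : Differentiable ℝ (deriv h))
    (heq : ∀ x, -deriv (deriv h) x + x ^ 2 * h x = E * h x) (a b : ℝ) :
    ∫ x in a..b, (deriv h x ^ 2 + x ^ 2 * h x ^ 2) =
      E * (∫ x in a..b, h x ^ 2) + (h b * deriv h b - h a * deriv h a) := by
  have := hd1.continuous
  have := hd2.continuous
  have hibp : ∫ x in a..b, (deriv h x ^ 2 + x ^ 2 * h x ^ 2 - E * h x ^ 2) =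
      h b * deriv h b - h a * deriv h a := by
    refine intervalIntegral.integral_eq_sub_of_hasDerivAt (fun x _ =>
      ((hd1 x).hasDerivAt.mul (hd2 x).hasDerivAt).congr_deriv ?_)
      (Continuous.intervalIntegrable (by fun_prop) _ _)
    linear_combination (-h x) * heq x
  rw [intervalIntegral.integral_sub (Continuous.intervalIntegrable (by fun_prop) _ _)
    (Continuous.intervalIntegrable (by fun_prop) _ _), intervalIntegral.integral_const_mul] at hibp
  linarith

theorem integrable_sq_mul_sq_and_integral_le {h : ℝ → ℝ} {E : ℝ}
    (hd1 : Differentiable ℝ h) (hd2 : Differentiable ℝ (deriv h))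
    (heq : ∀ x, -deriv (deriv h) x + x ^ 2 * h x = E * h x)
    (hint : Integrable fun x => h x ^ 2) :
    Integrable (fun x => x ^ 2 * h x ^ 2) ∧ ∫ x, x ^ 2 * h x ^ 2 ≤ E * ∫ x, h x ^ 2 := by
  have := hd1.continuous
  have := hd2.continuous
  choose b hbB hb using exists_ge_mul_deriv_le_mul_deriv_neg hd1 hint
  have htop : Tendsto b atTop atTop := tendsto_atTop_mono hbB tendsto_id
  have hbot : Tendsto (fun t => -b t) atTop atBot := tendsto_neg_atBot_iff.mpr htop
  have hbound : ∀ t ≥ 0,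
      ∫ x in -b t..b t, x ^ 2 * h x ^ 2 ≤ E * ∫ x in -b t..b t, h x ^ 2 := by
    intro t ht
    have hle : -b t ≤ b t := by linarith [hbB t]
    have henergy := integral_deriv_sq_add_mul_sq_eq hd1 hd2 heq (-b t) (b t)
    rw [intervalIntegral.integral_add
      (Continuous.intervalIntegrable (by fun_prop) _ _)
      (Continuous.intervalIntegrable (by fun_prop) _ _)] at henergy
    have : 0 ≤ ∫ x in -b t..b t, deriv h x ^ 2 :=
      intervalIntegral.integral_nonneg hle fun x _ => sq_nonneg _
    linarith [hb t]
  have hX : Integrable fun x => x ^ 2 * h x ^ 2 := by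
    refine integrable_of_intervalIntegral_norm_bounded (|E| * ∫ x, h x ^ 2)
      (fun t => (by fun_prop : Continuous _).integrableOn_Ioc) hbot htop ?_
    filter_upwards [eventually_ge_atTop 0] with t ht
    have hle : -b t ≤ b t := by linarith [hbB t]
    have hpart : ∫ x in -b t..b t, h x ^ 2 ≤ ∫ x, h x ^ 2 := by
      rw [intervalIntegral.integral_of_le hle]
      exact setIntegral_le_integral hint (.of_forall fun x => sq_nonneg _)
    have hpart0 : 0 ≤ ∫ x in -b t..b t, h x ^ 2 :=
      intervalIntegral.integral_nonneg hle fun x _ => sq_nonneg _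
    have hnorm (x : ℝ) : ‖x ^ 2 * h x ^ 2‖ = x ^ 2 * h x ^ 2 :=
      Real.norm_of_nonneg (by positivity)
    simp_rw [hnorm]
    calc _ ≤ E * ∫ x in -b t..b t, h x ^ 2 := hbound t ht
      _ ≤ |E| * ∫ x, h x ^ 2 :=
        (mul_le_mul_of_nonneg_right (le_abs_self E) hpart0).trans
          (mul_le_mul_of_nonneg_left hpart (abs_nonneg E))
  refine ⟨hX, le_of_tendsto_of_tendsto (intervalIntegral_tendsto_integral hX hbot htop)
    ((intervalIntegral_tendsto_integral hint hbot htop).const_mul E) ?_⟩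
  filter_upwards [eventually_ge_atTop 0] using hbound

theorem Real.rpow_le_rpow_add_rpow_sub_one_mul {b L δ : ℝ} (hb : 0 ≤ b) (hL : 0 < L)
    (hδ0 : 0 ≤ δ) (hδ1 : δ ≤ 1) : b ^ δ ≤ L ^ δ + L ^ (δ - 1) * b := by
  rcases le_total b L with hbL | hLb
  · have := Real.rpow_le_rpow hb hbL hδ0
    have : 0 ≤ L ^ (δ - 1) * b := by positivity
    linarith
  · have hb0 : 0 < b := hL.trans_le hLb
    calc b ^ δ = b ^ (δ - 1) * b := by rw [Real.rpow_sub_one hb0.ne', div_mul_cancel₀ _ hb0.ne']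
      _ ≤ L ^ (δ - 1) * b :=
        mul_le_mul_of_nonneg_right (Real.rpow_le_rpow_of_nonpos hL hLb (by linarith)) hb
      _ ≤ L ^ δ + L ^ (δ - 1) * b := le_add_of_nonneg_left (by positivity)

theorem one_add_abs_rpow_sq_le (x : ℝ) {E δ : ℝ} (hE : 0 < E) (hδ0 : 0 ≤ δ) (hδ1 : δ ≤ 1) :
    ((1 + |x|) ^ δ) ^ 2 ≤ E ^ δ + E ^ (δ - 1) * (2 * (1 + x ^ 2)) := by
  have hsq : (1 + |x|) ^ 2 ≤ 2 * (1 + x ^ 2) := by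
    simpa using add_sq_le (a := (1 : ℝ)) (b := |x|)
  rw [Real.rpow_pow_comm (by positivity)]
  exact (Real.rpow_le_rpow_add_rpow_sub_one_mul (by positivity) hE hδ0 hδ1).trans (by gcongr)

/-- Weighted `L²` bound for Hermite eigenfunctions: for `δ ∈ [0,1]` there is `C > 0`
(independent of `λ`) such that if `h` is an `L²`-normalized eigenfunction of the
harmonic oscillator `-d²/dx² + x²` with eigenvalue `λ² ≥ 1`, then
`‖(1+|x|)^δ h‖_{L²(ℝ)} ≤ C λ^δ`. -/
theorem stmt12 (δ : ℝ) (hδ : δ ∈ Set.Icc (0:ℝ) 1) :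
    ∃ C : ℝ, 0 < C ∧ ∀ lam : ℝ, 1 ≤ lam → ∀ h : ℝ → ℝ, ContDiff ℝ 2 h →
      (∀ x, -(deriv (deriv h) x) + x^2 * h x = lam^2 * h x) →
      Integrable (fun x => (h x)^2) →
      (∫ x, (h x)^2) = 1 →
      (∫ x, ((1+|x|) ^ δ * h x)^2) ≤ (C * lam ^ δ)^2 := by
  refine ⟨3, by norm_num, fun lam hlam h hh heq hint hnorm => ?_⟩
  set E := lam ^ 2
  have hE1 : 1 ≤ E := one_le_pow₀ hlam
  have hE0 : 0 < E := one_pos.trans_le hE1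
  obtain ⟨hX, hXE⟩ := integrable_sq_mul_sq_and_integral_le (hh.differentiable (by norm_num))
    hh.differentiable_deriv_two heq hint
  rw [hnorm, mul_one] at hXE
  have hsum : Integrable fun x => h x ^ 2 + x ^ 2 * h x ^ 2 := hint.add hX
  have hweight (x : ℝ) : ((1 + |x|) ^ δ * h x) ^ 2 ≤
      E ^ δ * h x ^ 2 + E ^ (δ - 1) * (2 * (h x ^ 2 + x ^ 2 * h x ^ 2)) := by
    rw [mul_pow]
    linear_combination
      mul_le_mul_of_nonneg_right (one_add_abs_rpow_sq_le x hE0 hδ.1 hδ.2) (sq_nonneg (h x))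
  calc ∫ x, ((1 + |x|) ^ δ * h x) ^ 2
      ≤ ∫ x, (E ^ δ * h x ^ 2 + E ^ (δ - 1) * (2 * (h x ^ 2 + x ^ 2 * h x ^ 2))) :=
        integral_mono_of_nonneg (.of_forall fun x => sq_nonneg _)
          ((hint.const_mul _).add ((hsum.const_mul 2).const_mul _)) (.of_forall hweight)
    _ = E ^ δ + E ^ (δ - 1) * (2 * (1 + ∫ x, x ^ 2 * h x ^ 2)) := by
        rw [integral_add (hint.const_mul _) ((hsum.const_mul 2).const_mul _),
          integral_const_mul, integral_const_mul, integral_const_mul, integral_add hint hX, hnorm,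
          mul_one]
    _ ≤ E ^ δ + E ^ (δ - 1) * (2 * (E + E)) := by gcongr
    _ = 5 * E ^ δ := by rw [Real.rpow_sub_one hE0.ne']; field_simp; ring
    _ ≤ (3 * lam ^ δ) ^ 2 := by
        rw [mul_pow, Real.rpow_pow_comm (by linarith)]
        have := Real.rpow_nonneg hE0.le δ
        linarith
end

section
/- Let λ_i = 2i-1 for i ∈ ℕ⁺ and Π = [0,2π)ⁿ. There exist constants C, μ₁ = 1, μ₂ = n+1 such that for all γ ∈ (0,1/4) and K ≥ 1, there is a closed subset D(γ,K) ⊂ Π with Meas(Π \ D) ≤ C γ K^{n+1}, such that for all ω ∈ D, all i,j ∈ ℕ⁺ and all nonzero k ∈ ℤⁿ with |k| ≤ K: |k·ω + λ_i - λ_j| ≥ γ(1 + |i-j|). -/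
/-!
Remove from `Π = [0,2π)ⁿ` the resonant strips `|k·ω + 2l| < γ(1 + |l|)` for `0 < ‖k‖_∞ ≤ K`
and `|l| ≤ 4|k|`; since `|k·ω| ≤ 2π|k|` on `Π`, strips with larger `|l|` do not meet `Π`.
A strip meets `Π` in measure at most `(2π)^(n-1) · 2γ(1 + |l|)/‖k‖_∞ ≤ 10nγ(2π)^(n-1)`,
because `1 + |l| ≤ 5|k| ≤ 5n‖k‖_∞`, and there are `O(K^(n+1))` strips.
-/

open MeasureTheory Finset

namespace Matrix

variable {ι R : Type*} [Fintype ι] [DecidableEq ι] [CommRing R]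

lemma det_updateRow_one (k : ι → R) (i : ι) : ((1 : Matrix ι ι R).updateRow i k).det = k i := by
  have : ∑ m, k m • (1 : Matrix ι ι R) m = k := by
    ext j
    simp [one_apply]
  simpa [this] using det_updateRow_sum (1 : Matrix ι ι R) i k

lemma toLin'_updateRow_one_apply (k : ι → R) (i : ι) (ω : ι → R) :
    toLin' ((1 : Matrix ι ι R).updateRow i k) ω = Function.update ω i (∑ m, k m * ω m) := by
  ext j
  rcases eq_or_ne j i with rfl | h
  · simp [mulVec, dotProduct]
  · simp [h, mulVec, one_apply, dotProduct]

end Matrix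

/-- The linear map replacing `ω i` by `k·ω` has determinant `k i` and maps the strip into a box
whose `i`-th side is an interval of length `2ε`. -/
theorem volume_pi_inter_abs_sum_mul_add_lt_le {ι : Type*} [Fintype ι] [DecidableEq ι]
    (s : ι → Set ℝ) (k : ι → ℝ) {i : ι} (hk : k i ≠ 0) (c ε : ℝ) :
    volume (Set.univ.pi s ∩ {ω | |∑ m, k m * ω m + c| < ε}) ≤
      ENNReal.ofReal (2 * ε / |k i|) * ∏ m ∈ univ.erase i, volume (s m) := by
  set f := Matrix.toLin' (Matrix.updateRow (1 : Matrix ι ι ℝ) i k)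
  have hdet : LinearMap.det f = k i := by rw [LinearMap.det_toLin', Matrix.det_updateRow_one]
  have hsub : Set.univ.pi s ∩ {ω | |∑ m, k m * ω m + c| < ε} ⊆
      f ⁻¹' Set.univ.pi (Function.update s i (Metric.ball (-c) ε)) := by
    rintro ω ⟨hs, hω⟩
    rw [Set.mem_preimage, Matrix.toLin'_updateRow_one_apply]
    intro j _
    rcases eq_or_ne j i with rfl | h
    · simpa [Real.dist_eq] using hω
    · simpa [h] using hs j trivial
  have hbox : ∏ m, volume (Function.update s i (Metric.ball (-c) ε) m) =
      ENNReal.ofReal (2 * ε) * ∏ m ∈ univ.erase i, volume (s m) := by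
    rw [← mul_prod_erase univ _ (mem_univ i), Function.update_self, Real.volume_ball]
    congr 1
    exact prod_congr rfl fun m hm => by rw [Function.update_of_ne (ne_of_mem_erase hm)]
  calc _ ≤ _ := measure_mono hsub
    _ = ENNReal.ofReal |(k i)⁻¹| *
          (ENNReal.ofReal (2 * ε) * ∏ m ∈ univ.erase i, volume (s m)) := by
      rw [Measure.addHaar_preimage_linearMap _ (hdet ▸ hk), hdet, volume_pi_pi, hbox]
    _ = _ := by
      rw [← mul_assoc, ← ENNReal.ofReal_mul (abs_nonneg _), abs_inv, inv_mul_eq_div]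

def torusBox (ι : Type*) : Set (ι → ℝ) := Set.univ.pi fun _ => Set.Ico 0 (2 * Real.pi)

/-- Since `λ_i - λ_j = 2 (i - j)`, the small divisor `k·ω + λ_i - λ_j` is `k·ω + 2l`
with `l = i - j`. -/
def resonantSet {ι : Type*} [Fintype ι] (γ : ℝ) (k : ι → ℤ) (l : ℤ) : Set (ι → ℝ) :=
  {ω | |∑ m, (k m : ℝ) * ω m + 2 * l| < γ * (1 + |(l : ℝ)|)}

/-- Only `|l| ≤ 4|k|` matter: for larger `l` the divisor is never small on `torusBox`. -/
noncomputable def resonances (ι : Type*) [Fintype ι] [DecidableEq ι] (K : ℝ) :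
    Finset ((ι → ℤ) × ℤ) :=
  ((Fintype.piFinset fun _ => Icc (-⌊K⌋) ⌊K⌋).erase 0 ×ˢ Icc (-(4 * ⌊K⌋)) (4 * ⌊K⌋)).filter
    fun q => |q.2| ≤ 4 * ∑ m, |q.1 m|

section

variable {ι : Type*} [Fintype ι]

lemma measurableSet_torusBox : MeasurableSet (torusBox ι) :=
  MeasurableSet.univ_pi fun _ => measurableSet_Ico

lemma measurableSet_resonantSet (γ : ℝ) (k : ι → ℤ) (l : ℤ) :
    MeasurableSet (resonantSet γ k l) :=
  (isOpen_lt (by fun_prop) (by fun_prop)).measurableSet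

lemma abs_sum_mul_le_of_mem_torusBox (k : ι → ℝ) {ω : ι → ℝ} (hω : ω ∈ torusBox ι) :
    |∑ m, k m * ω m| ≤ 2 * Real.pi * ∑ m, |k m| := by
  rw [mul_sum]
  refine (abs_sum_le_sum_abs _ _).trans (sum_le_sum fun m _ => ?_)
  obtain ⟨h0, h2π⟩ := hω m trivial
  rw [abs_mul, abs_of_nonneg h0, mul_comm]
  exact mul_le_mul_of_nonneg_right h2π.le (abs_nonneg _)

lemma le_abs_sum_mul_add_of_mem_torusBox {γ : ℝ} (hγ : γ ≤ 1 / 4) (k : ι → ℝ) {l : ℝ}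
    (hl : 4 * ∑ m, |k m| + 1 ≤ |l|) {ω : ι → ℝ} (hω : ω ∈ torusBox ι) :
    γ * (1 + |l|) ≤ |∑ m, k m * ω m + 2 * l| := by
  have hx := abs_sum_mul_le_of_mem_torusBox k hω
  set x := ∑ m, k m * ω m
  have htri : |2 * l| ≤ |x + 2 * l| + |x| := by
    simpa using abs_sub (x + 2 * l) x
  have hπ : Real.pi * ∑ m, |k m| ≤ 3.15 * ∑ m, |k m| :=
    mul_le_mul_of_nonneg_right Real.pi_lt_d2.le (sum_nonneg fun m _ => abs_nonneg _)
  have hγl : γ * (1 + |l|) ≤ 1 / 4 * (1 + |l|) :=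
    mul_le_mul_of_nonneg_right hγ (by positivity)
  rw [abs_mul, abs_two] at htri
  linarith [abs_nonneg l]

variable [DecidableEq ι]

lemma mem_resonances {K : ℝ} {k : ι → ℤ} (hk : k ≠ 0) (hkK : ∑ m, |(k m : ℝ)| ≤ K) {l : ℤ}
    (hl : |l| ≤ 4 * ∑ m, |k m|) : (k, l) ∈ resonances ι K := by
  have hT : ∑ m, |k m| ≤ ⌊K⌋ := Int.le_floor.mpr (by push_cast; exact hkK)
  have hkm : ∀ m, |k m| ≤ ∑ m, |k m| := fun m =>
    single_le_sum (f := fun m => |k m|) (fun _ _ => abs_nonneg _) (mem_univ m)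
  simp only [resonances, mem_filter, mem_product, mem_erase, Fintype.mem_piFinset, mem_Icc,
    ← abs_le]
  exact ⟨⟨⟨hk, fun m => (hkm m).trans hT⟩, by omega⟩, hl⟩

lemma card_resonances_le {K : ℝ} (hK : 1 ≤ K) :
    (#(resonances ι K) : ℝ) ≤ (3 * K) ^ Fintype.card ι * (9 * K) := by
  have hK₀ : (0 : ℤ) ≤ ⌊K⌋ := Int.floor_nonneg.mpr (by linarith)
  have hcard : ∀ a : ℤ, 0 ≤ a → (#(Icc (-a) a) : ℝ) = 2 * a + 1 := fun a ha => by
    have := Int.card_Icc_of_le (-a) a (by omega)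
    rw [show (2 * a + 1 : ℝ) = ((a + 1 - -a : ℤ) : ℝ) by push_cast; ring, ← this]
    norm_cast
  have hfloor : (⌊K⌋ : ℝ) ≤ K := Int.floor_le K
  calc (#(resonances ι K) : ℝ)
      ≤ #(Fintype.piFinset fun _ : ι => Icc (-⌊K⌋) ⌊K⌋) * #(Icc (-(4 * ⌊K⌋)) (4 * ⌊K⌋)) := by
        rw [← Nat.cast_mul, ← card_product, Nat.cast_le]
        exact (card_filter_le _ _).trans
          (card_le_card (product_subset_product_left (erase_subset _ _)))
    _ = (2 * ⌊K⌋ + 1) ^ Fintype.card ι * (8 * ⌊K⌋ + 1) := by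
        rw [Fintype.card_piFinset, prod_const, card_univ]
        push_cast
        rw [hcard _ hK₀, hcard _ (by omega)]
        push_cast
        ring
    _ ≤ (3 * K) ^ Fintype.card ι * (9 * K) := by
        gcongr <;> linarith

lemma volume_torusBox_inter_resonantSet_le {γ : ℝ} (hγ : 0 ≤ γ) {k : ι → ℤ} (hk : k ≠ 0)
    {l : ℤ} (hl : |l| ≤ 4 * ∑ m, |k m|) :
    volume (torusBox ι ∩ resonantSet γ k l) ≤
      ENNReal.ofReal (10 * Fintype.card ι * γ * (2 * Real.pi) ^ (Fintype.card ι - 1)) := by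
  obtain ⟨j, hj⟩ : ∃ j, k j ≠ 0 := Function.ne_iff.mp hk
  obtain ⟨i, -, hi⟩ := exists_max_image univ (fun m => |k m|) ⟨j, mem_univ j⟩
  have hki : 1 ≤ |k i| := (Int.one_le_abs hj).trans (hi j (mem_univ j))
  have hki₀ : (k i : ℝ) ≠ 0 := by exact_mod_cast abs_pos.mp (one_pos.trans_le hki)
  have hdivisor : 1 + |(l : ℝ)| ≤ 5 * Fintype.card ι * |(k i : ℝ)| := by
    have hsum : ∑ m, |k m| ≤ Fintype.card ι * |k i| := by
      simpa using sum_le_card_nsmul univ _ _ fun m hm => hi m hm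
    have hcard : |k i| ≤ Fintype.card ι * |k i| :=
      le_mul_of_one_le_left (abs_nonneg _) (by exact_mod_cast Fintype.card_pos_iff.mpr ⟨j⟩)
    exact_mod_cast (show 1 + |l| ≤ 5 * Fintype.card ι * |k i| by linarith)
  have hdiv : 2 * (γ * (1 + |(l : ℝ)|)) / |(k i : ℝ)| ≤ 10 * Fintype.card ι * γ := by
    have : (1 : ℝ) ≤ |(k i : ℝ)| := by exact_mod_cast hki
    rw [div_le_iff₀ (by positivity)]
    nlinarith
  calc volume (torusBox ι ∩ resonantSet γ k l)
      ≤ ENNReal.ofReal (2 * (γ * (1 + |(l : ℝ)|)) / |(k i : ℝ)|) *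
          ∏ m ∈ univ.erase i, volume (Set.Ico 0 (2 * Real.pi)) :=
        volume_pi_inter_abs_sum_mul_add_lt_le _ (fun m => (k m : ℝ)) hki₀ (2 * l) _
    _ = ENNReal.ofReal (2 * (γ * (1 + |(l : ℝ)|)) / |(k i : ℝ)| *
          (2 * Real.pi) ^ (Fintype.card ι - 1)) := by
        rw [prod_const, card_erase_of_mem (mem_univ i), card_univ, Real.volume_Ico, sub_zero,
          ← ENNReal.ofReal_pow Real.two_pi_pos.le, ← ENNReal.ofReal_mul (by positivity)]
    _ ≤ _ := ENNReal.ofReal_le_ofReal (mul_le_mul_of_nonneg_right hdiv (by positivity))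

lemma volume_torusBox_inter_iUnion_resonances_le {γ K : ℝ} (hγ : 0 ≤ γ) (hK : 1 ≤ K) :
    volume (torusBox ι ∩ ⋃ q ∈ resonances ι K, resonantSet γ q.1 q.2) ≤
      ENNReal.ofReal (90 * Fintype.card ι * 3 ^ Fintype.card ι *
        (2 * Real.pi) ^ (Fintype.card ι - 1) * γ * K ^ (Fintype.card ι + 1)) := by
  set n := Fintype.card ι
  set δ := 10 * n * γ * (2 * Real.pi) ^ (n - 1)
  rw [Set.inter_iUnion₂]
  calc _ ≤ ∑ q ∈ resonances ι K, volume (torusBox ι ∩ resonantSet γ q.1 q.2) :=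
        measure_biUnion_finset_le _ _
    _ ≤ ∑ _q ∈ resonances ι K, ENNReal.ofReal δ := sum_le_sum fun q hq => by
        simp only [resonances, mem_filter, mem_product, mem_erase] at hq
        exact volume_torusBox_inter_resonantSet_le hγ hq.1.1.1 hq.2
    _ = ENNReal.ofReal (#(resonances ι K) * δ) := by
        rw [sum_const, nsmul_eq_mul, ENNReal.ofReal_mul (Nat.cast_nonneg _),
          ENNReal.ofReal_natCast]
    _ ≤ ENNReal.ofReal ((3 * K) ^ n * (9 * K) * δ) :=
        ENNReal.ofReal_le_ofReal <|
          mul_le_mul_of_nonneg_right (card_resonances_le hK) (by positivity)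
    _ = _ := by
        congr 1
        ring

lemma le_abs_sum_mul_add_of_mem_diff_resonantSets {γ K : ℝ} (hγ : γ ≤ 1 / 4) {ω : ι → ℝ}
    (hω : ω ∈ torusBox ι \ ⋃ q ∈ resonances ι K, resonantSet γ q.1 q.2) {k : ι → ℤ}
    (hk : k ≠ 0) (hkK : ∑ m, |(k m : ℝ)| ≤ K) (l : ℤ) :
    γ * (1 + |(l : ℝ)|) ≤ |∑ m, (k m : ℝ) * ω m + 2 * l| := by
  by_cases hl : |l| ≤ 4 * ∑ m, |k m|
  · exact not_lt.mp fun h => hω.2 (Set.mem_biUnion (mem_resonances hk hkK hl) h)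
  · refine le_abs_sum_mul_add_of_mem_torusBox hγ _ ?_ hω.1
    exact_mod_cast (show 4 * ∑ m, |k m| + 1 ≤ |l| by omega)

end

/-- First Melnikov condition for the frequencies `λ_i = 2i-1`: there is `C > 0` such that
for all `γ ∈ (0,1/4)` and `K ≥ 1` there is a measurable set `D ⊆ Π = [0,2π)ⁿ` with
`Meas(Π \ D) ≤ C γ K^{n+1}` on which `|k·ω + λ_i - λ_j| ≥ γ (1+|i-j|)` for all `i, j ∈ ℕ⁺`
and all nonzero `k ∈ ℤⁿ` with `|k| ≤ K`. -/
theorem stmt14 (n : ℕ) (hn : 0 < n) :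
    ∃ C : ℝ, 0 < C ∧ ∀ γ K : ℝ, γ ∈ Set.Ioo (0:ℝ) (1/4) → 1 ≤ K →
    ∃ D : Set (Fin n → ℝ),
      D ⊆ Set.univ.pi (fun _ => Set.Ico (0:ℝ) (2*Real.pi)) ∧
      MeasurableSet D ∧
      volume ((Set.univ.pi fun _ => Set.Ico (0:ℝ) (2*Real.pi)) \ D)
        ≤ ENNReal.ofReal (C * γ * K ^ (n+1)) ∧
      ∀ ω ∈ D, ∀ i j : ℕ+, ∀ k : Fin n → ℤ, k ≠ 0 →
        (∑ l, (|k l| : ℝ)) ≤ K →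
        γ * (1 + |(i:ℝ) - (j:ℝ)|)
          ≤ |(∑ l, (k l : ℝ) * ω l) + (2*(i:ℝ)-1) - (2*(j:ℝ)-1)| := by
  refine ⟨90 * n * 3 ^ n * (2 * Real.pi) ^ (n - 1), by positivity, fun γ K hγ hK => ?_⟩
  refine ⟨torusBox (Fin n) \ ⋃ q ∈ resonances (Fin n) K, resonantSet γ q.1 q.2,
    Set.sdiff_subset,
    measurableSet_torusBox.diff (measurableSet_biUnion _ fun q _ => measurableSet_resonantSet ..),
    ?_, fun ω hω i j k hk hkK => ?_⟩
  · change volume (torusBox (Fin n) \ _) ≤ _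
    rw [Set.sdiff_sdiff_right_self]
    simpa using volume_torusBox_inter_iUnion_resonances_le (ι := Fin n) hγ.1.le hK
  · have h := le_abs_sum_mul_add_of_mem_diff_resonantSets hγ.2.le hω hk hkK ((i : ℤ) - j)
    push_cast at h
    convert h using 3
    ring
end

section
/- Let A = diag(Λ_1, Λ_2, ...) with |Λ_i - Λ_{i+1} + 2| ≤ ε/i^α (perturbation of λ_i = 2i-1 with difference control, where ε ≤ 1-2γ, γ ∈ (0,1/4), α ∈ (0,1]). Suppose ω ∈ ℝⁿ and k ∈ ℤⁿ with 0 < |k| ≤ K satisfy |k·ω + λ_i - λ_j| ≥ 2γ(1+|i-j|) for all i,j. Then for all i, j with min(i,j) ≥ (ε/γ)^{1/α}: |k·ω + Λ_i - Λ_j| ≥ γ(1+|i-j|). -/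
/-- Persistence of the small-divisor estimate for perturbed frequencies: if
`Λ_i = λ_i + \tildeλ_i` with `|Λ_i - Λ_{i+1} + 2| ≤ ε/i^α`, `ε ≤ 1-2γ`, `γ ∈ (0,1/4)`,
`α ∈ (0,1]`, and `|k·ω + λ_i - λ_j| ≥ 2γ(1+|i-j|)` for all `i,j` (for a fixed nonzero
`k` with `|k| ≤ K`), then `|k·ω + Λ_i - Λ_j| ≥ γ(1+|i-j|)` whenever
`min(i,j) ≥ (ε/γ)^{1/α}`. -/
theorem stmt18 (n : ℕ) (α γ ε K : ℝ)
    (hα : α ∈ Set.Ioc (0:ℝ) 1) (hγ : γ ∈ Set.Ioo (0:ℝ) (1/4))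
    (hε : 0 ≤ ε) (hεγ : ε ≤ 1 - 2*γ) (hK : 1 ≤ K)
    (Λ : ℕ+ → ℝ) (hΛ : ∀ i : ℕ+, |Λ i - Λ (i+1) + 2| ≤ ε / (i:ℝ) ^ α)
    (ω : Fin n → ℝ) (k : Fin n → ℤ) (hk : k ≠ 0)
    (hkK : (∑ l, (|k l| : ℝ)) ≤ K)
    (hmel : ∀ i j : ℕ+, 2*γ*(1 + |(i:ℝ)-(j:ℝ)|)
      ≤ |(∑ l, (k l : ℝ) * ω l) + (2*(i:ℝ)-1) - (2*(j:ℝ)-1)|) :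
    ∀ i j : ℕ+, (ε/γ) ^ (1/α) ≤ ((min i j : ℕ+):ℝ) →
      γ*(1 + |(i:ℝ)-(j:ℝ)|) ≤ |(∑ l, (k l : ℝ) * ω l) + Λ i - Λ j| := by
  obtain ⟨hα0, hα1⟩ := hα
  obtain ⟨hγ0, hγ4⟩ := hγ
  set S := (∑ l, (k l : ℝ) * ω l) with hS
  set μ : ℕ → ℝ := fun m => Λ m.succPNat - (2*((m:ℝ)+1) - 1) with hμ
  have hstep : ∀ m : ℕ, |μ m - μ (m+1)| ≤ ε / ((m:ℝ)+1) ^ α := by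
    intro m
    have h := hΛ m.succPNat
    have h1 : ((m.succPNat : ℕ) : ℝ) = (m:ℝ)+1 := by
      simp [Nat.succPNat]
    have h2 : m.succPNat + 1 = (m+1).succPNat := rfl
    rw [h2, h1] at h
    have : μ m - μ (m+1) = Λ m.succPNat - Λ ((m+1).succPNat) + 2 := by
      simp only [hμ]; push_cast; ring
    rw [this]
    exact h
  have hposα : ∀ m : ℕ, (0:ℝ) < ((m:ℝ)+1) ^ α := by
    intro m
    exact Real.rpow_pos_of_pos (by positivity) α
  have aux : ∀ m d : ℕ, |μ m - μ (m+d)| ≤ ε * d / ((m:ℝ)+1) ^ α := by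
    intro m d
    induction d with
    | zero => simp
    | succ d ih =>
      have tri : |μ m - μ (m+(d+1))| ≤ |μ m - μ (m+d)| + |μ (m+d) - μ (m+d+1)| := by
        have : μ m - μ (m+(d+1)) = (μ m - μ (m+d)) + (μ (m+d) - μ (m+d+1)) := by
          have : m + (d+1) = m + d + 1 := by omega
          rw [this]; ring
        rw [this]
        exact abs_add_le _ _
      have hst := hstep (m+d)
      have hb : ((m:ℝ)+1) ^ α ≤ (((m:ℝ)+(d:ℝ))+1) ^ α :=
        Real.rpow_le_rpow (by positivity) (by linarith [Nat.cast_nonneg (α := ℝ) d]) hα0.le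
      have hle : ε / (((m:ℝ)+(d:ℝ))+1) ^ α ≤ ε / ((m:ℝ)+1) ^ α :=
        div_le_div_of_nonneg_left hε (hposα m) hb
      have hst' : |μ (m+d) - μ (m+d+1)| ≤ ε / ((m:ℝ)+1) ^ α := by
        push_cast at hst ⊢
        calc |μ (m+d) - μ (m+d+1)| ≤ ε / (((m:ℝ)+(d:ℝ))+1) ^ α := hst
          _ ≤ _ := hle
      calc |μ m - μ (m+(d+1))| ≤ |μ m - μ (m+d)| + |μ (m+d) - μ (m+d+1)| := tri
        _ ≤ ε * d / ((m:ℝ)+1) ^ α + ε / ((m:ℝ)+1) ^ α := by linarith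
        _ = ε * ((d:ℕ)+1:ℕ) / ((m:ℝ)+1) ^ α := by push_cast; field_simp
      
  have key : ∀ i j : ℕ+, i ≤ j →
      |(Λ i - (2*(i:ℝ)-1)) - (Λ j - (2*(j:ℝ)-1))| ≤ ε * ((j:ℝ)-(i:ℝ)) / (i:ℝ) ^ α := by
    intro i j hij
    have hij' : (i:ℕ) ≤ (j:ℕ) := hij
    set m := (i:ℕ) - 1 with hm
    set d := (j:ℕ) - (i:ℕ) with hd
    have hip : 0 < (i:ℕ) := i.pos
    have hjp : 0 < (j:ℕ) := j.pos
    have hi : m.succPNat = i := by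
      apply PNat.coe_injective
      simp [Nat.succPNat, hm]
      omega
    have hj : (m+d).succPNat = j := by
      apply PNat.coe_injective
      simp [Nat.succPNat, hm, hd]
      omega
    have h := aux m d
    have hmi : ((m:ℝ)+1) = (i:ℝ) := by
      have h1 : m + 1 = (i:ℕ) := by omega
      exact_mod_cast congrArg (Nat.cast : ℕ → ℝ) h1
    have hdr : (d:ℝ) = (j:ℝ) - (i:ℝ) := by
      have : (d:ℕ) + (i:ℕ) = (j:ℕ) := by omega
      have := congrArg (Nat.cast : ℕ → ℝ) this
      push_cast at this
      linarith
    have hμi : μ m = Λ i - (2*(i:ℝ)-1) := by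
      simp only [hμ, hi, hmi]
    have hμj : μ (m+d) = Λ j - (2*(j:ℝ)-1) := by
      have hmj : ((m:ℝ)+(d:ℝ)+1) = (j:ℝ) := by linarith [hmi, hdr]
      simp only [hμ, hj]
      push_cast
      rw [show (m:ℝ)+(d:ℝ)+1 = (j:ℝ) from hmj]
    rw [hμi, hμj, hmi, hdr] at h
    exact h
  intro i j hmin
  have hminpos : (1:ℝ) ≤ ((min i j : ℕ+):ℝ) := by
    exact_mod_cast (min i j).one_le
  have hεγ0 : (0:ℝ) ≤ ε/γ := div_nonneg hε hγ0.le
  have hpow : ε/γ ≤ ((min i j : ℕ+):ℝ) ^ α := by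
    calc ε/γ = ((ε/γ) ^ (1/α)) ^ α := by
          rw [← Real.rpow_mul hεγ0, one_div_mul_cancel hα0.ne', Real.rpow_one]
      _ ≤ _ := Real.rpow_le_rpow (Real.rpow_nonneg hεγ0 _) hmin hα0.le
  have hminα : (0:ℝ) < ((min i j : ℕ+):ℝ) ^ α := Real.rpow_pos_of_pos (by linarith) α
  have hεle : ε ≤ γ * ((min i j : ℕ+):ℝ) ^ α := by
    rw [div_le_iff₀ hγ0] at hpow
    linarith [hpow]
  -- bound on |μ_i - μ_j|
  have hμbound : |(Λ i - (2*(i:ℝ)-1)) - (Λ j - (2*(j:ℝ)-1))| ≤ γ * |(i:ℝ)-(j:ℝ)| := by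
    rcases le_total i j with hij | hji
    · have h := key i j hij
      have hminij : min i j = i := min_eq_left hij
      have hijr : (i:ℝ) ≤ (j:ℝ) := by exact_mod_cast (show (i:ℕ) ≤ (j:ℕ) from hij)
      have habs : |(i:ℝ)-(j:ℝ)| = (j:ℝ)-(i:ℝ) := by rw [abs_sub_comm]; exact abs_of_nonneg (by linarith)
      rw [habs]
      rw [hminij] at hεle hminα
      calc _ ≤ ε * ((j:ℝ)-(i:ℝ)) / (i:ℝ) ^ α := h
        _ ≤ γ * ((j:ℝ)-(i:ℝ)) := by
            rw [div_le_iff₀ hminα]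
            nlinarith [hεle, hminα]
    · have h := key j i hji
      have hminij : min i j = j := min_eq_right hji
      have hijr : (j:ℝ) ≤ (i:ℝ) := by exact_mod_cast (show (j:ℕ) ≤ (i:ℕ) from hji)
      have habs : |(i:ℝ)-(j:ℝ)| = (i:ℝ)-(j:ℝ) := abs_of_nonneg (by linarith)
      rw [habs, abs_sub_comm]
      rw [hminij] at hεle hminα
      calc _ ≤ ε * ((i:ℝ)-(j:ℝ)) / (j:ℝ) ^ α := h
        _ ≤ γ * ((i:ℝ)-(j:ℝ)) := by
            rw [div_le_iff₀ hminα]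
            nlinarith [hεle, hminα]
  have hm := hmel i j
  have htri : |S + (2*(i:ℝ)-1) - (2*(j:ℝ)-1)| ≤ |S + Λ i - Λ j| + |(Λ i - (2*(i:ℝ)-1)) - (Λ j - (2*(j:ℝ)-1))| := by
    have heq : S + (2*(i:ℝ)-1) - (2*(j:ℝ)-1) = (S + Λ i - Λ j) - ((Λ i - (2*(i:ℝ)-1)) - (Λ j - (2*(j:ℝ)-1))) := by ring
    rw [heq]
    exact abs_sub _ _
  have habsnn : (0:ℝ) ≤ |(i:ℝ)-(j:ℝ)| := abs_nonneg _
  linarith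
end

section
/- Let λ² be an eigenvalue of H = -d²/dx² + x² with normalized eigenfunction h, and let δ' ≥ 0. Then ‖(1+|x|)·ln^{-δ'}(2+|x|)·h(x)‖_{L²(ℝ)} ≤ C·λ/ln^{δ'}(2+λ) for a constant C independent of λ. -/
/-!
Split the weight at `|x| = λ`. For `|x| ≥ λ` the logarithm in the denominator is at least
`ln(2 + λ)`; for `|x| ≤ λ` the map `t ↦ (2 + t) / ln^δ'(2 + t)`, i.e. `u ↦ eᵘ / u^δ'` with
`u = ln(2 + t)`, is increasing up to a constant factor depending only on `δ'`. Hence the weight is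
at most `C (2 + λ + |x|) / ln^δ'(2 + λ)`, and it remains to bound `∫ x² h² ≲ λ²`. That is an energy
estimate: testing the equation `x² h = λ² h + h''` against `φ² h` for a parabolic cutoff `φ` and
integrating by parts once, `∫ φ² h h'' ≤ ∫ (φ' h)²`, with no boundary terms.
-/

open MeasureTheory Real Filter

theorem one_add_div_rpow_le_mul_exp {δ c v : ℝ} (hδ : 0 ≤ δ) (hc : 0 < c) (hv : 0 ≤ v) :
    (1 + v / c) ^ δ ≤ (1 + δ / c) ^ δ * exp v := by
  have hk : 1 ≤ 1 + δ / c := le_add_of_nonneg_right (by positivity)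
  -- rescaling by `1 + δ / c` makes the exponent `δ / (c + δ)` of the final bound at most `1`
  have hbase : 1 + v / c ≤ (1 + δ / c) * exp (v / (c + δ)) := calc
    1 + v / c ≤ (1 + δ / c) * (1 + v / (c + δ)) := by
      rw [show (1 + δ / c) * (1 + v / (c + δ)) = 1 + δ / c + v / c by field_simp]
      linarith [div_nonneg hδ hc.le]
    _ ≤ (1 + δ / c) * exp (v / (c + δ)) := by
      gcongr
      linarith [add_one_le_exp (v / (c + δ))]
  calc (1 + v / c) ^ δ ≤ ((1 + δ / c) * exp (v / (c + δ))) ^ δ := by gcongr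
    _ = (1 + δ / c) ^ δ * exp (v / (c + δ) * δ) := by
      rw [mul_rpow (by linarith) (exp_pos _).le, exp_mul]
    _ ≤ (1 + δ / c) ^ δ * exp v := by
      gcongr
      rw [div_mul_eq_mul_div, div_le_iff₀ (by linarith)]
      nlinarith

theorem exp_div_rpow_le_of_le {δ c a b : ℝ} (hδ : 0 ≤ δ) (hc : 0 < c) (hca : c ≤ a)
    (hab : a ≤ b) : exp a / a ^ δ ≤ (1 + δ / c) ^ δ * (exp b / b ^ δ) := by
  have ha : 0 < a := hc.trans_le hca
  have hb : 0 < b := ha.trans_le hab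
  have hratio : b ≤ a * (1 + (b - a) / c) := by
    rw [mul_add, mul_one, mul_div_assoc']
    have : b - a ≤ a * (b - a) / c := by
      rw [le_div_iff₀ hc]; nlinarith
    linarith
  have key : b ^ δ ≤ a ^ δ * ((1 + δ / c) ^ δ * exp (b - a)) := calc
    b ^ δ ≤ (a * (1 + (b - a) / c)) ^ δ := by gcongr
    _ = a ^ δ * (1 + (b - a) / c) ^ δ := mul_rpow ha.le (by positivity)
    _ ≤ a ^ δ * ((1 + δ / c) ^ δ * exp (b - a)) := by
      gcongr
      exact one_add_div_rpow_le_mul_exp hδ hc (by linarith)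
  have hapow : 0 < a ^ δ := rpow_pos_of_pos ha δ
  have hbpow : 0 < b ^ δ := rpow_pos_of_pos hb δ
  rw [exp_sub] at key
  rw [mul_div_assoc', div_le_div_iff₀ hapow hbpow]
  calc exp a * b ^ δ ≤ exp a * (a ^ δ * ((1 + δ / c) ^ δ * (exp b / exp a))) := by gcongr
    _ = (1 + δ / c) ^ δ * exp b * a ^ δ := by field_simp

theorem two_add_div_log_rpow_le {δ s t : ℝ} (hδ : 0 ≤ δ) (hs : 0 ≤ s) (hst : s ≤ t) :
    (2 + s) / log (2 + s) ^ δ ≤ (1 + δ / log 2) ^ δ * ((2 + t) / log (2 + t) ^ δ) := by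
  have h := exp_div_rpow_le_of_le hδ (log_pos one_lt_two)
    (log_le_log two_pos (by linarith : (2:ℝ) ≤ 2 + s))
    (log_le_log (by linarith) (by linarith : 2 + s ≤ 2 + t))
  rwa [exp_log (by linarith), exp_log (by linarith)] at h

theorem abs_div_log_rpow_le {δ t : ℝ} (hδ : 0 ≤ δ) (ht : 0 ≤ t) (x : ℝ) :
    |(1 + |x|) / log (2 + |x|) ^ δ| ≤
      (1 + δ / log 2) ^ δ / log (2 + t) ^ δ * (2 + t + |x|) := by
  have hx := abs_nonneg x
  have hlog : ∀ {s : ℝ}, 0 ≤ s → 0 < log (2 + s) := fun hs => log_pos (by linarith)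
  have hLx : 0 < log (2 + |x|) ^ δ := rpow_pos_of_pos (hlog hx) δ
  have hLt : 0 < log (2 + t) ^ δ := rpow_pos_of_pos (hlog ht) δ
  have hK : 1 ≤ (1 + δ / log 2) ^ δ :=
    one_le_rpow (le_add_of_nonneg_right (div_nonneg hδ (log_pos one_lt_two).le)) hδ
  rw [abs_of_nonneg (div_nonneg (by linarith) hLx.le), div_mul_eq_mul_div]
  rcases le_total |x| t with hxt | htx
  · calc (1 + |x|) / log (2 + |x|) ^ δ ≤ (2 + |x|) / log (2 + |x|) ^ δ := by
          gcongr; linarith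
      _ ≤ (1 + δ / log 2) ^ δ * ((2 + t) / log (2 + t) ^ δ) :=
          two_add_div_log_rpow_le hδ hx hxt
      _ ≤ (1 + δ / log 2) ^ δ * (2 + t + |x|) / log (2 + t) ^ δ := by
          rw [mul_div_assoc]
          gcongr (1 + δ / log 2) ^ δ * (?_ / _)
          linarith
  · calc (1 + |x|) / log (2 + |x|) ^ δ ≤ (1 + |x|) / log (2 + t) ^ δ :=
          div_le_div_of_nonneg_left (by linarith) hLt
            (rpow_le_rpow (hlog ht).le (log_le_log (by linarith) (by linarith)) hδ)
      _ ≤ (1 + δ / log 2) ^ δ * (2 + t + |x|) / log (2 + t) ^ δ :=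
          div_le_div_of_nonneg_right (by nlinarith) hLt.le

theorem intervalIntegral_sq_mul_mul_le {a b : ℝ} (hab : a ≤ b) {φ φ' h h' h'' : ℝ → ℝ}
    (hφ : ∀ x, HasDerivAt φ (φ' x) x) (hh : ∀ x, HasDerivAt h (h' x) x)
    (hh' : ∀ x, HasDerivAt h' (h'' x) x) (hφ'c : Continuous φ') (hh''c : Continuous h'')
    (ha : φ a = 0) (hb : φ b = 0) :
    ∫ x in a..b, φ x ^ 2 * (h x * h'' x) ≤ ∫ x in a..b, (φ' x * h x) ^ 2 := by
  have hφc : Continuous φ := continuous_iff_continuousAt.2 fun x => (hφ x).continuousAt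
  have hhc : Continuous h := continuous_iff_continuousAt.2 fun x => (hh x).continuousAt
  have hh'c : Continuous h' := continuous_iff_continuousAt.2 fun x => (hh' x).continuousAt
  have hu : ∀ x, HasDerivAt (fun y => φ y ^ 2 * h y)
      (2 * φ x * φ' x * h x + φ x ^ 2 * h' x) x :=
    fun x => (((hφ x).pow 2).mul (hh x)).congr_deriv (by simp)
  have ibp := intervalIntegral.integral_mul_deriv_eq_deriv_mul (fun x _ => hu x)
    (fun x _ => hh' x) (Continuous.intervalIntegrable (by fun_prop) a b)
    (hh''c.intervalIntegrable a b)
  -- after one integration by parts, complete the square: the subtracted square is `((φ h)')²`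
  calc ∫ x in a..b, φ x ^ 2 * (h x * h'' x)
      = -∫ x in a..b, (2 * φ x * φ' x * h x + φ x ^ 2 * h' x) * h' x := by
        simp only [← mul_assoc]; rw [ibp, ha, hb]; ring
    _ = ∫ x in a..b, ((φ' x * h x) ^ 2 - (φ x * h' x + φ' x * h x) ^ 2) := by
        rw [← intervalIntegral.integral_neg]; congr 1; ext x; ring
    _ ≤ ∫ x in a..b, (φ' x * h x) ^ 2 :=
        intervalIntegral.integral_mono_on hab (Continuous.intervalIntegrable (by fun_prop) a b)
          (Continuous.intervalIntegrable (by fun_prop) a b) fun x _ =>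
            sub_le_self _ (sq_nonneg _)

theorem intervalIntegral_cutoff_mul_sq_le {E R : ℝ} (hE : 0 ≤ E) (hR : 0 < R) {h : ℝ → ℝ}
    (hh : ContDiff ℝ 2 h) (hode : ∀ x, -deriv (deriv h) x + x ^ 2 * h x = E * h x)
    (hint : Integrable fun x => h x ^ 2) :
    ∫ x in -R..R, (1 - (x / R) ^ 2) ^ 2 * (x ^ 2 * h x ^ 2) ≤
      (E + 4 / R ^ 2) * ∫ x, h x ^ 2 := by
  have hRR : -R ≤ R := by linarith
  have hφ : ∀ x, HasDerivAt (fun y => 1 - (y / R) ^ 2) (-(2 * x / R ^ 2)) x := fun x =>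
    ((((hasDerivAt_id x).div_const R).pow 2).const_sub 1).congr_deriv (by simp; field_simp)
  have hh' : ContDiff ℝ 1 (deriv h) := hh.deriv'
  have hh'' : Continuous (deriv (deriv h)) := hh'.continuous_deriv le_rfl
  have ii : ∀ {f : ℝ → ℝ}, Continuous f → IntervalIntegrable f volume (-R) R :=
    fun hf => hf.intervalIntegrable _ _
  have hcont := hh.continuous
  have hsq : ∫ x in -R..R, h x ^ 2 ≤ ∫ x, h x ^ 2 := by
    rw [intervalIntegral.integral_of_le hRR]
    exact setIntegral_le_integral hint (ae_of_all _ fun x => sq_nonneg _)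
  have hxR : ∀ x ∈ Set.Icc (-R) R, (x / R) ^ 2 ≤ 1 := fun x hx => by
    rw [div_pow, div_le_one (by positivity)]; nlinarith [hx.1, hx.2]
  calc ∫ x in -R..R, (1 - (x / R) ^ 2) ^ 2 * (x ^ 2 * h x ^ 2)
      = E * (∫ x in -R..R, (1 - (x / R) ^ 2) ^ 2 * h x ^ 2)
          + ∫ x in -R..R, (1 - (x / R) ^ 2) ^ 2 * (h x * deriv (deriv h) x) := by
        rw [← intervalIntegral.integral_const_mul, ← intervalIntegral.integral_add
          (ii (by fun_prop)) (ii (by fun_prop))]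
        congr 1 with x
        linear_combination (1 - (x / R) ^ 2) ^ 2 * h x * hode x
    _ ≤ E * (∫ x in -R..R, h x ^ 2) + ∫ x in -R..R, (-(2 * x / R ^ 2) * h x) ^ 2 := by
        gcongr
        · refine intervalIntegral.integral_mono_on hRR (ii (by fun_prop)) (ii (by fun_prop))
            fun x hx => mul_le_of_le_one_left (sq_nonneg _) ?_
          nlinarith [hxR x hx, sq_nonneg (x / R)]
        · exact intervalIntegral_sq_mul_mul_le hRR hφ
            (fun x => (hh.differentiable two_ne_zero x).hasDerivAt)
            (fun x => (hh'.differentiable one_ne_zero x).hasDerivAt) (by fun_prop) hh''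
            (by simp [hR.ne']) (by simp [hR.ne'])
    _ ≤ E * (∫ x, h x ^ 2) + 4 / R ^ 2 * ∫ x in -R..R, h x ^ 2 := by
        gcongr
        rw [← intervalIntegral.integral_const_mul]
        refine intervalIntegral.integral_mono_on hRR (ii (by fun_prop)) (ii (by fun_prop))
            fun x hx => ?_
        rw [show (-(2 * x / R ^ 2) * h x) ^ 2 = 4 / R ^ 2 * ((x / R) ^ 2 * h x ^ 2) by ring]
        gcongr
        exact mul_le_of_le_one_left (sq_nonneg _) (hxR x hx)
    _ ≤ (E + 4 / R ^ 2) * ∫ x, h x ^ 2 := by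
        rw [add_mul]; gcongr

theorem intervalIntegral_sq_mul_sq_le {E R : ℝ} (hE : 0 ≤ E) (hR : 1 ≤ R) {h : ℝ → ℝ}
    (hh : ContDiff ℝ 2 h) (hode : ∀ x, -deriv (deriv h) x + x ^ 2 * h x = E * h x)
    (hint : Integrable fun x => h x ^ 2) :
    ∫ x in -R..R, x ^ 2 * h x ^ 2 ≤ 2 * (E + 1) * ∫ x, h x ^ 2 := by
  have hcut := intervalIntegral_cutoff_mul_sq_le hE (by linarith : 0 < 2 * R) hh hode hint
  have hcont := hh.continuous
  -- on `[-R, R]` the cutoff `1 - (x / 2R)²` is at least `3 / 4`, and `(3 / 4)² ≥ 1 / 2`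
  calc ∫ x in -R..R, x ^ 2 * h x ^ 2
      ≤ ∫ x in -R..R, 2 * ((1 - (x / (2 * R)) ^ 2) ^ 2 * (x ^ 2 * h x ^ 2)) := by
        refine intervalIntegral.integral_mono_on (by linarith) (Continuous.intervalIntegrable
          (by fun_prop) _ _) (Continuous.intervalIntegrable (by fun_prop) _ _) fun x hx => ?_
        have : (x / (2 * R)) ^ 2 ≤ 1 / 4 := by
          rw [div_pow, div_le_iff₀ (by positivity)]; nlinarith [hx.1, hx.2]
        have : 1 ≤ 2 * (1 - (x / (2 * R)) ^ 2) ^ 2 := by nlinarith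
        nlinarith [mul_nonneg (sq_nonneg x) (sq_nonneg (h x))]
    _ ≤ 2 * ∫ x in -(2 * R)..2 * R, (1 - (x / (2 * R)) ^ 2) ^ 2 * (x ^ 2 * h x ^ 2) := by
        rw [intervalIntegral.integral_const_mul]
        gcongr 2 * ?_
        exact intervalIntegral.integral_mono_interval (by linarith) (by linarith) (by linarith)
          (ae_of_all _ fun x => by positivity) (Continuous.intervalIntegrable (by fun_prop) _ _)
    _ ≤ 2 * ((E + 4 / (2 * R) ^ 2) * ∫ x, h x ^ 2) := by gcongr
    _ ≤ 2 * (E + 1) * ∫ x, h x ^ 2 := by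
        rw [← mul_assoc]
        gcongr
        rw [div_le_one (by positivity)]; nlinarith

theorem integrable_and_integral_le_of_intervalIntegral_le {f : ℝ → ℝ} (hf : Continuous f)
    (hf0 : ∀ x, 0 ≤ f x) {B : ℝ} (hB : ∀ R, 1 ≤ R → ∫ x in -R..R, f x ≤ B) :
    Integrable f ∧ ∫ x, f x ≤ B := by
  have hbound : ∀ᶠ R in atTop, ∫ x in -R..R, f x ≤ B := eventually_ge_atTop 1 |>.mono hB
  have hfi : Integrable f := integrable_of_intervalIntegral_norm_bounded B
    (fun _ => hf.integrableOn_Ioc) tendsto_neg_atTop_atBot tendsto_id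
    (by simpa only [norm_eq_abs, abs_of_nonneg (hf0 _), id_eq] using hbound)
  exact ⟨hfi, le_of_tendsto (intervalIntegral_tendsto_integral hfi tendsto_neg_atTop_atBot
    tendsto_id) hbound⟩

theorem integral_mul_sq_le {g h : ℝ → ℝ} {A c : ℝ} (hg : ∀ x, |g x| ≤ A * (c + |x|))
    (hint : Integrable fun x => h x ^ 2) (hint₂ : Integrable fun x => x ^ 2 * h x ^ 2) :
    ∫ x, (g x * h x) ^ 2 ≤ 2 * A ^ 2 * (c ^ 2 * (∫ x, h x ^ 2) + ∫ x, x ^ 2 * h x ^ 2) := by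
  have hpt (x : ℝ) : (g x * h x) ^ 2 ≤ 2 * A ^ 2 * (c ^ 2 * h x ^ 2 + x ^ 2 * h x ^ 2) := by
    have hg2 : g x ^ 2 ≤ A ^ 2 * (c + |x|) ^ 2 := by
      rw [← sq_abs, ← mul_pow]; exact pow_le_pow_left₀ (abs_nonneg _) (hg x) 2
    have hcx : (c + |x|) ^ 2 ≤ 2 * (c ^ 2 + x ^ 2) := by
      nlinarith [sq_nonneg (c - |x|), sq_abs x]
    calc (g x * h x) ^ 2 = g x ^ 2 * h x ^ 2 := mul_pow _ _ _
      _ ≤ A ^ 2 * (2 * (c ^ 2 + x ^ 2)) * h x ^ 2 := by gcongr; exact hg2.trans (by gcongr)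
      _ = _ := by ring
  calc ∫ x, (g x * h x) ^ 2
      ≤ ∫ x, 2 * A ^ 2 * (c ^ 2 * h x ^ 2 + x ^ 2 * h x ^ 2) :=
        integral_mono_of_nonneg (ae_of_all _ fun x => sq_nonneg _)
          (((hint.const_mul _).add hint₂).const_mul _) (ae_of_all _ hpt)
    _ = _ := by
        rw [integral_const_mul, integral_add (hint.const_mul _) hint₂, integral_const_mul]

/-- Logarithmically weighted `L²` bound for Hermite eigenfunctions: for `δ' ≥ 0` there
is `C > 0` (independent of `λ`) such that if `h` is an `L²`-normalized eigenfunction of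
the harmonic oscillator `-d²/dx² + x²` with eigenvalue `λ² ≥ 1`, then
`‖(1+|x|) ln^{-δ'}(2+|x|) h‖_{L²(ℝ)} ≤ C λ / ln^{δ'}(2+λ)`. -/
theorem stmt19 (δ' : ℝ) (hδ' : 0 ≤ δ') :
    ∃ C : ℝ, 0 < C ∧ ∀ lam : ℝ, 1 ≤ lam → ∀ h : ℝ → ℝ, ContDiff ℝ 2 h →
      (∀ x, -(deriv (deriv h) x) + x^2 * h x = lam^2 * h x) →
      Integrable (fun x => (h x)^2) →
      (∫ x, (h x)^2) = 1 →
      (∫ x, ((1+|x|) / (Real.log (2+|x|)) ^ δ' * h x)^2)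
        ≤ (C * lam / (Real.log (2+lam)) ^ δ')^2 := by
  refine ⟨6 * (1 + δ' / log 2) ^ δ', by positivity, fun lam hlam h hh hode hint hnorm => ?_⟩
  obtain ⟨hint₂, hx2⟩ := integrable_and_integral_le_of_intervalIntegral_le
    (by fun_prop : Continuous fun x => x ^ 2 * h x ^ 2) (fun x => by positivity)
    fun R hR => intervalIntegral_sq_mul_sq_le (sq_nonneg lam) hR hh hode hint
  have hw := integral_mul_sq_le (abs_div_log_rpow_le hδ' (by linarith : 0 ≤ lam)) hint hint₂
  rw [hnorm] at hw hx2
  calc _ ≤ _ := hw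
    _ ≤ ((1 + δ' / log 2) ^ δ' / log (2 + lam) ^ δ') ^ 2 * (36 * lam ^ 2) := by
        rw [mul_comm 2, mul_assoc]
        gcongr _ * ?_
        nlinarith
    _ = _ := by ring
end
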